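/- arXiv:1301.3569 — 5 statements merged into one kernel-verified Lean document; each statement's English description precedes it below -/
import Mathlib

section
/- There is a bijection between the set of (k+1)-cores of length m (cores whose cells with hook length at most k number exactly m) and the set of partitions of m with all parts at most k. -/
def YoungDiagram.hook (μ : YoungDiagram) (c : ℕ × ℕ) : ℕ :=
  (μ.rowLen c.1 - c.2) + (μ.colLen c.2 - c.1) - 1

def YoungDiagram.IsCore (r : ℕ) (μ : YoungDiagram) : Prop :=
  ∀ c ∈ μ.cells, μ.hook c ≠ r

def YoungDiagram.coreLength (k : ℕ) (μ : YoungDiagram) : ℕ :=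
  (μ.cells.filter fun c => μ.hook c ≤ k).card

/-!
Encode a diagram `μ` by its beta numbers `β i = μ.rowLen i - i`. The numbers
`γ j = j + 1 - μ.colLen j` enumerate the complement of `{β i}`, and the cell `(i, j)` has hook
length `β i - γ j`. Hence `μ` is a `(k+1)`-core iff its beta set is closed under
`x ↦ x - (k + 1)`: on the abacus whose `k + 1` runners are the residue classes mod `k + 1`, every
runner is filled from below up to a top bead. The number of cells of row `i` with hook length
`≤ k` is the number of empty positions strictly between `β i - (k + 1)` and `β i`.

For a bead `a` of such an abacus, the number of empty positions just above `a` is the number of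
runners whose top bead lies below `a`. So it is monotone in `a` (the row counts of a core decrease
weakly), strictly so at top beads, and it takes every value in `[0, k]` at the top beads. Reading
the rows from the bottom up, the count of row `i` therefore determines `β i` from the beads below
it, and every value between the count of the row below and `k` is realised by an admissible `β i`.
-/

open Finset

namespace Abacus

variable {k : ℕ} {T : Set ℤ} {a b c p t x y : ℤ} {v : ℕ}

structure IsCore (k : ℕ) (T : Set ℤ) : Prop where
  sub_mem : ∀ t ∈ T, t - (k + 1) ∈ T
  bddAbove : BddAbove T
  exists_Iic_subset : ∃ M, Set.Iic M ⊆ T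

theorem le_sub_of_intCast_eq_of_lt (h : (x : ZMod (k + 1)) = y) (hxy : x < y) :
    x ≤ y - (k + 1) := by
  have := Int.le_of_dvd (by omega) ((ZMod.intCast_eq_intCast_iff_dvd_sub x y (k + 1)).mp h)
  push_cast at this
  omega

theorem IsCore.sub_mul_mem (hT : IsCore k T) (ht : t ∈ T) (m : ℕ) : t - (k + 1) * m ∈ T := by
  induction m with
  | zero => simpa
  | succ m ih => convert hT.sub_mem _ ih using 1; push_cast; ring

theorem IsCore.mem_of_le_of_intCast_eq (hT : IsCore k T) (ht : t ∈ T) (hxt : x ≤ t)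
    (h : (x : ZMod (k + 1)) = t) : x ∈ T := by
  obtain ⟨m, hm⟩ := (ZMod.intCast_eq_intCast_iff_dvd_sub x t (k + 1)).mp h
  push_cast at hm
  lift m to ℕ using by nlinarith
  convert hT.sub_mul_mem ht m using 1
  linarith

noncomputable def runnerTop (k : ℕ) (T : Set ℤ) (ρ : ZMod (k + 1)) : ℤ :=
  sSup {t ∈ T | (t : ZMod (k + 1)) = ρ}

theorem IsCore.runnerTop_mem (hT : IsCore k T) (ρ : ZMod (k + 1)) :
    runnerTop k T ρ ∈ T ∧ (runnerTop k T ρ : ZMod (k + 1)) = ρ := by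
  refine Int.csSup_mem ?_ (hT.bddAbove.mono (Set.sep_subset T _))
  obtain ⟨M, hM⟩ := hT.exists_Iic_subset
  refine ⟨ρ.val - (k + 1) * (ρ.val - M).toNat, hM ?_, by simp⟩
  simp only [Set.mem_Iic]
  nlinarith [Int.self_le_toNat ((ρ.val : ℤ) - M), Int.natCast_nonneg ((ρ.val : ℤ) - M).toNat]

theorem IsCore.le_runnerTop (hT : IsCore k T) (ht : t ∈ T) : t ≤ runnerTop k T t :=
  le_csSup (hT.bddAbove.mono (Set.sep_subset T _)) ⟨ht, rfl⟩

theorem IsCore.mem_iff_le_runnerTop (hT : IsCore k T) : x ∈ T ↔ x ≤ runnerTop k T x :=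
  ⟨hT.le_runnerTop, fun h => hT.mem_of_le_of_intCast_eq (hT.runnerTop_mem x).1 h
    (hT.runnerTop_mem x).2.symm⟩

theorem IsCore.runnerTop_add_notMem (hT : IsCore k T) (ρ : ZMod (k + 1)) :
    runnerTop k T ρ + (k + 1) ∉ T := by
  intro h
  have := hT.le_runnerTop h
  push_cast [(hT.runnerTop_mem ρ).2] at this
  simp at this
  omega

theorem IsCore.runnerTop_eq (hT : IsCore k T) (ha : a ∈ T) (ha' : a + (k + 1) ∉ T) :
    runnerTop k T a = a := by
  obtain ⟨htopT, htop⟩ := hT.runnerTop_mem a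
  refine le_antisymm ?_ (hT.le_runnerTop ha)
  by_contra! hlt
  have := le_sub_of_intCast_eq_of_lt htop.symm hlt
  exact ha' (hT.mem_of_le_of_intCast_eq htopT (by omega) (by simp [htop]))

theorem intCast_injOn_Ioc (a : ℤ) :
    Set.InjOn (Int.cast : ℤ → ZMod (k + 1)) (Set.Ioc a (a + (k + 1))) := by
  intro x hx y hy h
  simp only [Set.mem_Ioc] at hx hy
  rcases lt_trichotomy x y with hlt | heq | hlt
  · have := le_sub_of_intCast_eq_of_lt h hlt; omega
  · exact heq
  · have := le_sub_of_intCast_eq_of_lt h.symm hlt; omega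

theorem exists_mem_Ioc_intCast_eq (a : ℤ) (ρ : ZMod (k + 1)) :
    ∃ y ∈ Set.Ioc a (a + (k + 1)), (y : ZMod (k + 1)) = ρ := by
  classical
  have himage : (Ioc a (a + (k + 1))).image (Int.cast : ℤ → ZMod (k + 1)) = univ := by
    apply eq_univ_of_card
    rw [card_image_of_injOn (by simpa using intCast_injOn_Ioc a), Int.card_Ioc, ZMod.card]
    omega
  have hρ := mem_univ ρ
  rw [← himage, mem_image] at hρ
  simpa using hρ

open scoped Classical in
noncomputable def gapCount (k : ℕ) (T : Set ℤ) (a : ℤ) : ℕ :=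
  #{y ∈ Ioo a (a + (k + 1)) | y ∉ T}

theorem IsCore.gapCount_eq_card_runnerTop_lt (hT : IsCore k T) (ha : a ∈ T) :
    gapCount k T a = #{ρ | runnerTop k T ρ < a} := by
  classical
  unfold gapCount
  apply card_nbij (Int.cast : ℤ → ZMod (k + 1))
  · intro y hy
    simp only [mem_coe, mem_filter, mem_Ioo, mem_univ, true_and, hT.mem_iff_le_runnerTop,
      not_le] at hy ⊢
    have := le_sub_of_intCast_eq_of_lt (hT.runnerTop_mem y).2 hy.2
    omega
  · exact (intCast_injOn_Ioc a).mono fun y hy => by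
      simp only [mem_coe, mem_filter, mem_Ioo] at hy
      exact ⟨hy.1.1, hy.1.2.le⟩
  · intro ρ hρ
    simp only [mem_coe, mem_filter, mem_univ, true_and] at hρ
    obtain ⟨y, ⟨hay, hya⟩, rfl⟩ := exists_mem_Ioc_intCast_eq (k := k) a ρ
    refine ⟨y, ?_, rfl⟩
    have hne : y ≠ a + (k + 1) := by
      rintro rfl
      have := hT.le_runnerTop ha
      simp at hρ
      omega
    simp only [mem_coe, mem_filter, mem_Ioo, hT.mem_iff_le_runnerTop, not_le]
    omega

theorem gapCount_le (k : ℕ) (T : Set ℤ) (a : ℤ) : gapCount k T a ≤ k := by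
  classical
  unfold gapCount
  refine (card_filter_le _ _).trans_eq ?_
  rw [Int.card_Ioo]
  omega

theorem gapCount_congr {T' : Set ℤ}
    (h : ∀ y, a < y → y < a + (k + 1) → (y ∈ T ↔ y ∈ T')) :
    gapCount k T a = gapCount k T' a := by
  classical
  unfold gapCount
  congr 1
  refine filter_congr fun y hy => ?_
  rw [mem_Ioo] at hy
  exact not_congr (h y hy.1 hy.2)

theorem IsCore.gapCount_mono (hT : IsCore k T) (ha : a ∈ T) (hb : b ∈ T) (hab : a ≤ b) :
    gapCount k T a ≤ gapCount k T b := by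
  rw [hT.gapCount_eq_card_runnerTop_lt ha, hT.gapCount_eq_card_runnerTop_lt hb]
  exact card_le_card fun ρ => by simpa using fun h => h.trans_le hab

theorem IsCore.gapCount_lt (hT : IsCore k T) (ha : a ∈ T) (ha' : a + (k + 1) ∉ T) (hb : b ∈ T)
    (hab : a < b) : gapCount k T a < gapCount k T b := by
  rw [hT.gapCount_eq_card_runnerTop_lt ha, hT.gapCount_eq_card_runnerTop_lt hb]
  refine card_lt_card ⟨fun ρ => by simpa using fun h => h.trans hab, fun hsub => ?_⟩
  have := @hsub (a : ZMod (k + 1))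
  simp [hT.runnerTop_eq ha ha', hab] at this

theorem IsCore.exists_gapCount_eq (hT : IsCore k T) (hv : v ≤ k) :
    ∃ a ∈ T, a + (k + 1) ∉ T ∧ gapCount k T a = v := by
  let f : ZMod (k + 1) → Fin (k + 1) := fun ρ =>
    ⟨gapCount k T (runnerTop k T ρ), Nat.lt_succ_of_le (gapCount_le k T _)⟩
  have hf : Function.Injective f := by
    intro ρ σ h
    have h' : gapCount k T (runnerTop k T ρ) = gapCount k T (runnerTop k T σ) :=
      congrArg Fin.val h
    rcases lt_trichotomy (runnerTop k T ρ) (runnerTop k T σ) with hlt | heq | hlt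
    · exact absurd h' (hT.gapCount_lt (hT.runnerTop_mem ρ).1 (hT.runnerTop_add_notMem ρ)
        (hT.runnerTop_mem σ).1 hlt).ne
    · rw [← (hT.runnerTop_mem ρ).2, ← (hT.runnerTop_mem σ).2, heq]
    · exact absurd h' (hT.gapCount_lt (hT.runnerTop_mem σ).1 (hT.runnerTop_add_notMem σ)
        (hT.runnerTop_mem ρ).1 hlt).ne'
  obtain ⟨ρ, hρ⟩ := ((Fintype.bijective_iff_injective_and_card f).mpr ⟨hf, by simp⟩).2
    ⟨v, Nat.lt_succ_of_le hv⟩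
  exact ⟨_, (hT.runnerTop_mem ρ).1, hT.runnerTop_add_notMem ρ, congrArg Fin.val hρ⟩

theorem IsCore.exists_gt_gapCount_eq (hT : IsCore k T) (hp : p ∈ T)
    (hv : v ≤ k) (hpv : gapCount k T (p - (k + 1)) ≤ v) :
    ∃ b, p < b ∧ b - (k + 1) ∈ T ∧ gapCount k T (b - (k + 1)) = v := by
  obtain ⟨a, ha, ha', rfl⟩ := hT.exists_gapCount_eq hv
  refine ⟨a + (k + 1), ?_, by simpa using ha, by simp⟩
  by_contra! hle
  have hne : a ≠ p - (k + 1) := by rintro rfl; simp [hp] at ha'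
  have := hT.gapCount_lt ha ha' (hT.sub_mem p hp) (by omega)
  omega

theorem IsCore.eq_of_gapCount_eq (hT : IsCore k T) (hb : b - (k + 1) ∈ T) (hc : c - (k + 1) ∈ T)
    (hb' : b ∉ T) (hc' : c ∉ T) (h : gapCount k T (b - (k + 1)) = gapCount k T (c - (k + 1))) :
    b = c := by
  rcases lt_trichotomy b c with hlt | heq | hlt
  · have := hT.gapCount_lt hb (by simpa using hb') hc (by omega)
    omega
  · exact heq
  · have := hT.gapCount_lt hc (by simpa using hc') hb (by omega)
    omega

end Abacus

namespace YoungDiagram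

variable {k : ℕ} {μ ν κ : YoungDiagram} {i j N : ℕ} {x y b : ℤ}

theorem rowLen_eq_zero_iff : μ.rowLen i = 0 ↔ (i, 0) ∉ μ := by
  rw [mem_iff_lt_rowLen]
  omega

theorem rowLen_eq_zero (h : μ.colLen 0 ≤ i) : μ.rowLen i = 0 :=
  rowLen_eq_zero_iff.mpr fun hi => (mem_iff_lt_colLen.mp hi).not_ge h

theorem ext_rowLen (h : ∀ i, μ.rowLen i = ν.rowLen i) : μ = ν := by
  ext ⟨i, j⟩
  simp only [mem_cells, mem_iff_lt_rowLen, h]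

def beta (μ : YoungDiagram) (i : ℕ) : ℤ := μ.rowLen i - i

def coBeta (μ : YoungDiagram) (j : ℕ) : ℤ := j + 1 - μ.colLen j

theorem beta_strictAnti (μ : YoungDiagram) : StrictAnti μ.beta := fun a b hab => by
  have := μ.rowLen_anti a b hab.le
  unfold beta
  omega

theorem coBeta_strictMono (μ : YoungDiagram) : StrictMono μ.coBeta := fun a b hab => by
  have := μ.colLen_anti a b hab.le
  unfold coBeta
  omega

theorem beta_of_colLen_le (h : μ.colLen 0 ≤ i) : μ.beta i = -i := by
  simp [beta, rowLen_eq_zero h]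

theorem coBeta_lt_beta_iff : μ.coBeta j < μ.beta i ↔ (i, j) ∈ μ := by
  have h : j < μ.rowLen i ↔ i < μ.colLen j := mem_iff_lt_rowLen.symm.trans mem_iff_lt_colLen
  rw [mem_iff_lt_rowLen]
  unfold beta coBeta
  omega

theorem beta_ne_coBeta : μ.beta i ≠ μ.coBeta j := by
  have h : j < μ.rowLen i ↔ i < μ.colLen j := mem_iff_lt_rowLen.symm.trans mem_iff_lt_colLen
  unfold beta coBeta
  omega

theorem hook_eq (h : (i, j) ∈ μ) : (μ.hook (i, j) : ℤ) = μ.beta i - μ.coBeta j := by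
  have := mem_iff_lt_rowLen.mp h
  have := mem_iff_lt_colLen.mp h
  simp only [hook, beta, coBeta]
  omega

theorem exists_coBeta_eq (hx : x ∉ Set.range μ.beta) : ∃ j, μ.coBeta j = x := by
  classical
  have hex : ∃ i, μ.beta i < x := ⟨μ.rowLen 0 + x.natAbs + 1, by
    have := μ.rowLen_anti 0 (μ.rowLen 0 + x.natAbs + 1) (Nat.zero_le _)
    unfold beta
    omega⟩
  set i := Nat.find hex
  have hi : μ.beta i < x := Nat.find_spec hex
  have hlt : ∀ l < i, x < μ.beta l := fun l hl =>
    lt_of_le_of_ne (not_lt.mp (Nat.find_min hex hl)) fun h => hx ⟨l, h.symm⟩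
  have hcol : μ.colLen (x - 1 + i).toNat = i := by
    refine eq_of_forall_lt_iff fun l => ?_
    rw [← mem_iff_lt_colLen, mem_iff_lt_rowLen]
    constructor
    · intro hl
      by_contra! hil
      have := μ.rowLen_anti i l hil
      unfold beta at hi
      omega
    · intro hl
      have hxi := hlt (i - 1) (by omega)
      have := μ.rowLen_anti l (i - 1) (by omega)
      unfold beta at hxi hi
      omega
  refine ⟨(x - 1 + i).toNat, ?_⟩
  unfold beta at hi
  unfold coBeta
  omega

theorem mem_beta_image_Ioi_iff (hy : y < μ.beta i) (hji : j ≤ i) :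
    y ∈ μ.beta '' Set.Ioi j ↔ y ∈ Set.range μ.beta := by
  refine ⟨fun hy => Set.image_subset_range _ _ hy, ?_⟩
  rintro ⟨l, rfl⟩
  exact ⟨l, lt_of_le_of_lt hji ((beta_strictAnti μ).lt_iff_gt.mp hy), rfl⟩

theorem lt_beta_of_mem_image_Ioi (hy : y ∈ μ.beta '' Set.Ioi i) : y < μ.beta i := by
  obtain ⟨l, hl, rfl⟩ := hy
  exact beta_strictAnti μ hl

theorem isCore_iff_sub_mem_beta_image_Ioi :
    μ.IsCore (k + 1) ↔ ∀ i, μ.beta i - (k + 1) ∈ μ.beta '' Set.Ioi i := by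
  refine ⟨fun hμ i => (mem_beta_image_Ioi_iff (by omega) le_rfl).mpr ?_, fun h c hc hk => ?_⟩
  · by_contra hx
    obtain ⟨j, hj⟩ := exists_coBeta_eq hx
    have hij : (i, j) ∈ μ := coBeta_lt_beta_iff.mp (by omega)
    have := hook_eq hij
    exact hμ _ ((mem_cells _).mpr hij) (by omega)
  · obtain ⟨i, j⟩ := c
    have := hook_eq ((mem_cells _).mp hc)
    obtain ⟨l, -, hl⟩ := h i
    exact beta_ne_coBeta (μ := μ) (i := l) (j := j) (by omega)

theorem abacusIsCore_beta_image_Ioi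
    (h : ∀ l, i < l → μ.beta l - (k + 1) ∈ μ.beta '' Set.Ioi l) :
    Abacus.IsCore k (μ.beta '' Set.Ioi i) where
  sub_mem := by
    rintro _ ⟨l, hl, rfl⟩
    obtain ⟨m, hm, hm'⟩ := h l hl
    exact ⟨m, Set.mem_Ioi.mpr (lt_trans hl hm), hm'⟩
  bddAbove := ⟨μ.beta (i + 1), by
    rintro _ ⟨l, hl, rfl⟩
    exact (beta_strictAnti μ).antitone hl⟩
  exists_Iic_subset := ⟨-(max (μ.colLen 0) (i + 1) : ℕ), fun x hx => ⟨(-x).toNat, by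
    simp only [Set.mem_Iic] at hx
    refine ⟨by simp only [Set.mem_Ioi]; omega, ?_⟩
    rw [beta_of_colLen_le (by omega)]
    omega⟩⟩

def smallHookCount (k : ℕ) (μ : YoungDiagram) (i : ℕ) : ℕ :=
  #{c ∈ μ.cells | c.1 = i ∧ μ.hook c ≤ k}

theorem smallHookCount_eq_gapCount (k : ℕ) (μ : YoungDiagram) (i : ℕ) :
    μ.smallHookCount k i = Abacus.gapCount k (Set.range μ.beta) (μ.beta i - (k + 1)) := by
  classical
  unfold smallHookCount Abacus.gapCount
  apply card_nbij (fun c => μ.coBeta c.2)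
  · rintro ⟨i', j⟩ hc
    simp only [mem_coe, mem_filter, mem_cells] at hc
    obtain ⟨hc, rfl, hk⟩ := hc
    have := hook_eq hc
    have := coBeta_lt_beta_iff.mpr hc
    simp only [mem_coe, mem_filter, mem_Ioo, Set.mem_range, not_exists]
    exact ⟨⟨by omega, by omega⟩, fun l => beta_ne_coBeta⟩
  · rintro ⟨i₁, j₁⟩ h₁ ⟨i₂, j₂⟩ h₂ h
    simp only [mem_coe, mem_filter] at h₁ h₂
    obtain rfl := (coBeta_strictMono μ).injective h
    rw [h₁.2.1, h₂.2.1]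
  · intro y hy
    simp only [mem_coe, mem_filter, mem_Ioo] at hy
    obtain ⟨j, rfl⟩ := exists_coBeta_eq hy.2
    have hij : (i, j) ∈ μ := coBeta_lt_beta_iff.mp (by omega)
    have := hook_eq hij
    exact ⟨(i, j), by simpa [hij] using (by omega : μ.hook (i, j) ≤ k), rfl⟩

theorem smallHookCount_le (k : ℕ) (μ : YoungDiagram) (i : ℕ) : μ.smallHookCount k i ≤ k :=
  smallHookCount_eq_gapCount k μ i ▸ Abacus.gapCount_le _ _ _

theorem smallHookCount_eq_zero (h : μ.rowLen i = 0) : μ.smallHookCount k i = 0 := by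
  refine card_eq_zero.mpr (filter_eq_empty_iff.mpr fun c hc hci => ?_)
  obtain ⟨i', j⟩ := c
  obtain rfl : i' = i := hci.1
  exact absurd (mem_iff_lt_rowLen.mp ((mem_cells _).mp hc)) (by omega)

theorem gapCount_beta_image_Ioi (hji : j ≤ i) :
    Abacus.gapCount k (μ.beta '' Set.Ioi j) (μ.beta i - (k + 1)) = μ.smallHookCount k i := by
  rw [smallHookCount_eq_gapCount]
  exact Abacus.gapCount_congr fun y _ hy => mem_beta_image_Ioi_iff (by omega) hji

theorem IsCore.smallHookCount_antitone (hμ : μ.IsCore (k + 1)) :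
    Antitone (μ.smallHookCount k) := by
  intro i i' hii'
  have hsub := isCore_iff_sub_mem_beta_image_Ioi.mp hμ
  rw [← gapCount_beta_image_Ioi (le_refl i), ← gapCount_beta_image_Ioi hii']
  refine (abacusIsCore_beta_image_Ioi fun l _ => hsub l).gapCount_mono
    (Set.image_mono (Set.Ioi_subset_Ioi hii') (hsub i')) (hsub i) ?_
  linarith [(beta_strictAnti μ).antitone hii']

noncomputable def ofAntitone (f : ℕ → ℕ) (hf : Antitone f) (hfin : ∃ N, f N = 0) :
    YoungDiagram where
  cells := Set.Finite.toFinset (s := {c | c.2 < f c.1}) <| by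
    obtain ⟨N, hN⟩ := hfin
    refine ((Set.finite_Iio N).prod (Set.finite_Iio (f 0))).subset fun c hc => ⟨?_, ?_⟩
    · by_contra h
      have := hf (not_lt.mp h)
      simp_all
    · exact lt_of_lt_of_le hc (hf (Nat.zero_le _))
  isLowerSet := by
    intro c c' hc' hc
    simp only [Set.Finite.coe_toFinset] at hc ⊢
    exact lt_of_le_of_lt hc'.2 (lt_of_lt_of_le hc (hf hc'.1))

theorem mem_ofAntitone {f : ℕ → ℕ} {hf : Antitone f} {hfin : ∃ N, f N = 0} :
    (i, j) ∈ ofAntitone f hf hfin ↔ j < f i :=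
  Set.Finite.mem_toFinset _

theorem rowLen_ofAntitone {f : ℕ → ℕ} {hf : Antitone f} {hfin : ∃ N, f N = 0} :
    (ofAntitone f hf hfin).rowLen i = f i :=
  eq_of_forall_lt_iff fun j => by rw [← mem_iff_lt_rowLen, mem_ofAntitone]

theorem card_filter_cells_eq_sum (P : ℕ × ℕ → Prop) [DecidablePred P]
    (hN : μ.rowLen N = 0) :
    #{c ∈ μ.cells | P c} = ∑ i ∈ range N, #{c ∈ μ.cells | c.1 = i ∧ P c} := by
  rw [card_eq_sum_card_fiberwise (f := Prod.fst) (t := range N)]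
  · simp only [filter_filter, and_comm]
  · rintro ⟨i, j⟩ hc
    simp only [coe_filter, mem_cells] at hc
    have := mem_iff_lt_rowLen.mp hc.1
    have := μ.rowLen_anti N i
    simp only [coe_range, Set.mem_Iio]
    omega

theorem card_eq_sum_rowLen (hN : μ.rowLen N = 0) : μ.card = ∑ i ∈ range N, μ.rowLen i := by
  have := card_filter_cells_eq_sum (fun _ => True) hN
  simp only [filter_true, and_true] at this
  simp only [YoungDiagram.card, this, rowLen_eq_card, row]

theorem coreLength_eq_sum_smallHookCount (hN : μ.rowLen N = 0) :
    μ.coreLength k = ∑ i ∈ range N, μ.smallHookCount k i :=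
  card_filter_cells_eq_sum _ hN

noncomputable def toKBounded (k : ℕ) (μ : YoungDiagram) (hμ : μ.IsCore (k + 1)) :
    YoungDiagram :=
  ofAntitone (μ.smallHookCount k) hμ.smallHookCount_antitone
    ⟨μ.colLen 0, smallHookCount_eq_zero (rowLen_eq_zero le_rfl)⟩

theorem rowLen_toKBounded (hμ : μ.IsCore (k + 1)) (i : ℕ) :
    (toKBounded k μ hμ).rowLen i = μ.smallHookCount k i :=
  rowLen_ofAntitone

theorem card_toKBounded (hμ : μ.IsCore (k + 1)) :
    (toKBounded k μ hμ).card = μ.coreLength k := by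
  have hN : μ.rowLen (μ.colLen 0) = 0 := rowLen_eq_zero le_rfl
  rw [card_eq_sum_rowLen (N := μ.colLen 0), coreLength_eq_sum_smallHookCount hN]
  · simp only [rowLen_toKBounded]
  · rw [rowLen_toKBounded, smallHookCount_eq_zero hN]

theorem eq_of_smallHookCount_eq (hμ : μ.IsCore (k + 1)) (hν : ν.IsCore (k + 1))
    (h : ∀ i, μ.smallHookCount k i = ν.smallHookCount k i) : μ = ν := by
  have hμ' := isCore_iff_sub_mem_beta_image_Ioi.mp hμ
  have hν' := isCore_iff_sub_mem_beta_image_Ioi.mp hν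
  set N := max (μ.colLen 0) (ν.colLen 0)
  have hbeta : ∀ d i, N ≤ i + d → μ.beta i = ν.beta i := by
    intro d
    induction d with
    | zero =>
      intro i hi
      rw [beta_of_colLen_le (by omega), beta_of_colLen_le (by omega)]
    | succ d ih =>
      intro i hi
      have htail : μ.beta '' Set.Ioi i = ν.beta '' Set.Ioi i :=
        Set.image_congr fun l hl => ih l (by simp only [Set.mem_Ioi] at hl; omega)
      refine (abacusIsCore_beta_image_Ioi fun l _ => hμ' l).eq_of_gapCount_eq (hμ' i)
        (htail ▸ hν' i) (fun h => (lt_beta_of_mem_image_Ioi h).false)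
        (fun h => (lt_beta_of_mem_image_Ioi (htail ▸ h)).false) ?_
      rw [gapCount_beta_image_Ioi le_rfl, htail, gapCount_beta_image_Ioi le_rfl, h i]
  refine ext_rowLen fun i => ?_
  have := hbeta N i (by omega)
  unfold beta at this
  omega

theorem exists_beta_eq_of_beta_succ_lt (h : μ.beta (i + 1) < b) :
    ∃ ν : YoungDiagram, ν.beta i = b ∧ ∀ l, i < l → ν.beta l = μ.beta l := by
  have hb : 0 ≤ b + i := by unfold beta at h; omega
  let f : ℕ → ℕ := fun l => if l ≤ i then (b + i).toNat else μ.rowLen l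
  have hf : Antitone f := antitone_nat_of_succ_le fun l => by
    have := μ.rowLen_anti l (l + 1) (Nat.le_succ l)
    have := μ.rowLen_anti (i + 1) (l + 1)
    unfold beta at h
    simp only [f]
    split_ifs <;> omega
  have hfin : ∃ N, f N = 0 := ⟨μ.colLen 0 + i + 1, by
    simp only [f]
    split_ifs
    · omega
    · exact rowLen_eq_zero (by omega)⟩
  refine ⟨ofAntitone f hf hfin, ?_, fun l hl => ?_⟩
  · simp only [beta, rowLen_ofAntitone, f, if_pos le_rfl]
    omega
  · simp only [beta, rowLen_ofAntitone, f, if_neg (by omega : ¬ l ≤ i)]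

theorem isCore_bot (r : ℕ) : (⊥ : YoungDiagram).IsCore r := fun c hc =>
  absurd hc (by simp)

theorem exists_smallHookCount_eq_of_le
    (hκ : ∀ l, i < l → κ.beta l - (k + 1) ∈ κ.beta '' Set.Ioi l) {v : ℕ} (hv : v ≤ k)
    (hvi : κ.smallHookCount k (i + 1) ≤ v) :
    ∃ κ' : YoungDiagram, (∀ l, i ≤ l → κ'.beta l - (k + 1) ∈ κ'.beta '' Set.Ioi l) ∧
      κ'.smallHookCount k i = v ∧
        ∀ l, i < l → κ'.smallHookCount k l = κ.smallHookCount k l := by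
  have hT := abacusIsCore_beta_image_Ioi hκ
  have hp : κ.beta (i + 1) ∈ κ.beta '' Set.Ioi i := ⟨i + 1, Nat.lt_succ_self i, rfl⟩
  obtain ⟨b, hpb, hbT, hbv⟩ :=
    hT.exists_gt_gapCount_eq hp hv (by rwa [gapCount_beta_image_Ioi (Nat.le_succ i)])
  obtain ⟨κ', hκ'i, hκ'l⟩ := exists_beta_eq_of_beta_succ_lt hpb
  have htail : ∀ l, i ≤ l → κ'.beta '' Set.Ioi l = κ.beta '' Set.Ioi l := fun l hl =>
    Set.image_congr fun m hm => hκ'l m (by simp only [Set.mem_Ioi] at hm; omega)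
  refine ⟨κ', fun l hl => ?_, ?_, fun l hl => ?_⟩
  · rcases eq_or_lt_of_le hl with rfl | hil
    · rwa [htail _ le_rfl, hκ'i]
    · rw [htail l hl, hκ'l l hil]
      exact hκ l hil
  · rw [← gapCount_beta_image_Ioi le_rfl, htail i le_rfl, hκ'i, hbv]
  · rw [← gapCount_beta_image_Ioi le_rfl, htail l hl.le, hκ'l l hl,
      gapCount_beta_image_Ioi le_rfl]

theorem exists_isCore_smallHookCount_eq (lam : YoungDiagram) (hlam : ∀ i, lam.rowLen i ≤ k) :
    ∃ κ : YoungDiagram, κ.IsCore (k + 1) ∧ ∀ i, κ.smallHookCount k i = lam.rowLen i := by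
  suffices h : ∀ d, ∃ κ : YoungDiagram, ∀ l, lam.colLen 0 - d ≤ l →
      κ.beta l - (k + 1) ∈ κ.beta '' Set.Ioi l ∧ κ.smallHookCount k l = lam.rowLen l by
    obtain ⟨κ, hκ⟩ := h (lam.colLen 0)
    exact ⟨κ, isCore_iff_sub_mem_beta_image_Ioi.mpr fun l => (hκ l (by omega)).1,
      fun l => (hκ l (by omega)).2⟩
  intro d
  induction d with
  | zero =>
    refine ⟨⊥, fun l hl => ⟨isCore_iff_sub_mem_beta_image_Ioi.mp (isCore_bot _) l, ?_⟩⟩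
    rw [smallHookCount_eq_zero (rowLen_eq_zero_iff.mpr (by simp)), rowLen_eq_zero (by omega)]
  | succ d ih =>
    obtain ⟨κ, hκ⟩ := ih
    by_cases hd : lam.colLen 0 ≤ d
    · exact ⟨κ, fun l hl => hκ l (by omega)⟩
    set i := lam.colLen 0 - (d + 1)
    obtain ⟨κ', hgood, hi, hrows⟩ := exists_smallHookCount_eq_of_le
      (fun l hl => (hκ l (by omega)).1) (hlam i)
      ((hκ (i + 1) (by omega)).2.trans_le (lam.rowLen_anti _ _ (Nat.le_succ i)))
    refine ⟨κ', fun l hl => ⟨hgood l hl, ?_⟩⟩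
    rcases eq_or_lt_of_le hl with rfl | hil
    · exact hi
    · rw [hrows l hil, (hκ l (by omega)).2]

end YoungDiagram

open YoungDiagram

/-- There is a bijection between `(k+1)`-cores of length `m` and `k`-bounded
partitions of `m`, sending a core `κ` to the partition whose `i`-th part is the
number of cells in row `i` of `κ` with hook length at most `k`. -/
theorem core_kBounded_bijection (k m : ℕ) :
    ∃ e : {κ : YoungDiagram // κ.IsCore (k + 1) ∧ κ.coreLength k = m} ≃
          {lam : YoungDiagram // lam.card = m ∧ ∀ i, lam.rowLen i ≤ k},
      ∀ κ, ∀ i : ℕ,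
        ((e κ : YoungDiagram)).rowLen i
          = ((κ : YoungDiagram).cells.filter
              fun c => c.1 = i ∧ (κ : YoungDiagram).hook c ≤ k).card := by
  let F : {κ : YoungDiagram // κ.IsCore (k + 1) ∧ κ.coreLength k = m} →
      {lam : YoungDiagram // lam.card = m ∧ ∀ i, lam.rowLen i ≤ k} := fun κ =>
    ⟨toKBounded k κ κ.2.1, by rw [card_toKBounded, κ.2.2], fun i => by
      rw [rowLen_toKBounded]; exact smallHookCount_le k κ i⟩
  have hF : Function.Bijective F := by
    refine ⟨fun κ κ' h => Subtype.ext (eq_of_smallHookCount_eq κ.2.1 κ'.2.1 fun i => ?_),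
      fun lam => ?_⟩
    · rw [← rowLen_toKBounded κ.2.1, ← rowLen_toKBounded κ'.2.1]
      exact congrArg (fun lam => lam.1.rowLen i) h
    · obtain ⟨κ, hκ, hcount⟩ := exists_isCore_smallHookCount_eq lam.1 lam.2.2
      have hlam : toKBounded k κ hκ = lam := ext_rowLen fun i => by
        rw [rowLen_toKBounded, hcount]
      refine ⟨⟨κ, hκ, by rw [← card_toKBounded hκ, hlam, lam.2.1]⟩, Subtype.ext hlam⟩
  exact ⟨Equiv.ofBijective F hF, fun κ i => rowLen_toKBounded κ.2.1 i⟩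
end

section
/- In the nilCoxeter algebra of S_n, the elements h_k = Σ_{w decreasing, ℓ(w)=k} A_w pairwise commute: h_k h_l = h_l h_k for all k, l. -/
/-!
Let `x`, `y` be commuting central formal variables and `h_i(x) = 1 + x A_i`, so that
`h(x) = h_{n-1}(x) ⋯ h_1(x) = ∑_k h_k x^k`; it suffices that `h(x) h(y) = h(y) h(x)`.
The factors satisfy `h_i(x) h_i(y) = h_i(x + y)`, commute for distant indices, and obey the
Yang–Baxter relation `h_{i+1}(x) h_i(x + y) h_{i+1}(y) = h_i(y) h_{i+1}(x + y) h_i(x)`.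
By induction on `n` these show that `h(x)` commutes with the ascending product
`h_1(y) ⋯ h_{n-1}(y)`, whose value at `-y` is the inverse of `h(y)`; hence `h(x)` commutes
with `h(y)`.
-/

/-- The defining relations of the nilCoxeter algebra of `S_n` (with `m = n - 1`
generators `A_1, …, A_{n-1}`, indexed here by `Fin m`): `A_i² = 0`, the braid
relation for adjacent indices, and commutation for distant indices. -/
inductive NilCoxeterRel (m : ℕ) :
    FreeAlgebra ℤ (Fin m) → FreeAlgebra ℤ (Fin m) → Prop
  | sq (i : Fin m) :
      NilCoxeterRel m (FreeAlgebra.ι ℤ i * FreeAlgebra.ι ℤ i) 0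
  | braid (i j : Fin m) (h : (i : ℕ) + 1 = j ∨ (j : ℕ) + 1 = i) :
      NilCoxeterRel m (FreeAlgebra.ι ℤ i * FreeAlgebra.ι ℤ j * FreeAlgebra.ι ℤ i)
        (FreeAlgebra.ι ℤ j * FreeAlgebra.ι ℤ i * FreeAlgebra.ι ℤ j)
  | comm (i j : Fin m) (h : (i : ℕ) + 1 < j ∨ (j : ℕ) + 1 < i) :
      NilCoxeterRel m (FreeAlgebra.ι ℤ i * FreeAlgebra.ι ℤ j)
        (FreeAlgebra.ι ℤ j * FreeAlgebra.ι ℤ i)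

/-- The nilCoxeter algebra of `S_n` with `m = n - 1` generators. -/
abbrev NilCoxeter (m : ℕ) := RingQuot (NilCoxeterRel m)

/-- The generator `A_i` of the nilCoxeter algebra. -/
noncomputable def nilA (m : ℕ) (i : Fin m) : NilCoxeter m :=
  RingQuot.mkRingHom (NilCoxeterRel m) (FreeAlgebra.ι ℤ i)

/-- `h_k = Σ_{w decreasing, ℓ(w) = k} A_w`: for each decreasing permutation `w` of
length `k`, the element `A_w` is the product of the generators indexed by the
(unique) strictly decreasing reduced word of `w`; these correspond exactly to the
`k`-element subsets of the generator indices, multiplied in decreasing order. -/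
noncomputable def nilH (m k : ℕ) : NilCoxeter m :=
  ∑ S ∈ Finset.powersetCard k (Finset.univ : Finset (Fin m)),
    (((S.sort (· ≤ ·)).reverse).map (nilA m)).prod

open Polynomial

structure IsNilCoxeterFamily {T : Type*} [Semiring T] (a : ℕ → T) : Prop where
  mul_self : ∀ i, a i * a i = 0
  braid : ∀ i, a (i + 1) * a i * a (i + 1) = a i * a (i + 1) * a i
  commute : ∀ i j, i + 2 ≤ j → Commute (a i) (a j)

theorem IsNilCoxeterFamily.map {T T' : Type*} [Semiring T] [Semiring T'] {a : ℕ → T}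
    (ha : IsNilCoxeterFamily a) (f : T →+* T') : IsNilCoxeterFamily (f ∘ a) where
  mul_self i := by simp only [Function.comp, ← map_mul, ha.mul_self, map_zero]
  braid i := by simp only [Function.comp, ← map_mul, ha.braid]
  commute i j h := (ha.commute i j h).map f

section CoxeterFactor

variable {T : Type*} [Semiring T] (a : ℕ → T) (t s : T)

def coxeterFactor (i : ℕ) : T := 1 + t * a i

def coxeterDescProd (n : ℕ) : T := ((List.range n).reverse.map (coxeterFactor a t)).prod

def coxeterAscProd (n : ℕ) : T := ((List.range n).map (coxeterFactor a t)).prod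

@[simp]
theorem coxeterDescProd_zero : coxeterDescProd a t 0 = 1 := rfl

@[simp]
theorem coxeterAscProd_zero : coxeterAscProd a t 0 = 1 := rfl

theorem coxeterDescProd_succ (n : ℕ) :
    coxeterDescProd a t (n + 1) = coxeterFactor a t n * coxeterDescProd a t n := by
  simp [coxeterDescProd, List.range_succ]

theorem coxeterAscProd_succ (n : ℕ) :
    coxeterAscProd a t (n + 1) = coxeterAscProd a t n * coxeterFactor a t n := by
  simp [coxeterAscProd, List.range_succ]

theorem map_coxeterDescProd {T' : Type*} [Semiring T'] (f : T →+* T') (n : ℕ) :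
    f (coxeterDescProd a t n) = coxeterDescProd (f ∘ a) (f t) n := by
  simp only [coxeterDescProd, map_list_prod, List.map_map]
  congr 3
  ext i
  simp [coxeterFactor]

variable {a t s}

theorem coxeterFactor_zero_left (i : ℕ) : coxeterFactor a 0 i = 1 := by
  simp [coxeterFactor]

theorem coxeterFactor_mul_coxeterFactor {i : ℕ} (hi : a i * a i = 0) (hs : Commute s (a i)) :
    coxeterFactor a t i * coxeterFactor a s i = coxeterFactor a (t + s) i := by
  have : t * a i * (s * a i) = 0 := by rw [mul_assoc, hs.symm.left_comm, hi, mul_zero, mul_zero]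
  simp only [coxeterFactor, mul_add, add_mul, mul_one, one_mul, this]
  abel

theorem commute_coxeterFactor {i j : ℕ} (hij : Commute (a i) (a j)) (hts : Commute t s)
    (htj : Commute t (a j)) (hsi : Commute s (a i)) :
    Commute (coxeterFactor a t i) (coxeterFactor a s j) :=
  have : Commute (t * a i) (s * a j) := (hts.mul_right htj).mul_left (hsi.symm.mul_right hij)
  (Commute.one_left _).add_left ((Commute.one_right _).add_right this)

end CoxeterFactor

namespace IsNilCoxeterFamily

section Semiring

variable {T : Type*} [Semiring T] {a : ℕ → T} {t s : T}

theorem coxeterFactor_yangBaxter (ha : IsNilCoxeterFamily a) (ht : ∀ j, Commute t (a j))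
    (hs : ∀ j, Commute s (a j)) (hts : Commute t s) (i : ℕ) :
    coxeterFactor a t (i + 1) * coxeterFactor a (t + s) i * coxeterFactor a s (i + 1) =
      coxeterFactor a s i * coxeterFactor a (t + s) (i + 1) * coxeterFactor a t i := by
  have braid : a (i + 1) * (a i * a (i + 1)) = a i * (a (i + 1) * a i) := by
    simpa only [mul_assoc] using ha.braid i
  have ta : ∀ j c, a j * (t * c) = t * (a j * c) := fun j => (ht j).symm.left_comm
  have sa : ∀ j c, a j * (s * c) = s * (a j * c) := fun j => (hs j).symm.left_comm
  have st : ∀ c, s * (t * c) = t * (s * c) := hts.symm.left_comm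
  simp only [coxeterFactor, mul_add, add_mul, mul_one, one_mul, mul_assoc, ta, sa, st,
    ha.mul_self, braid, mul_zero, add_zero]
  abel

theorem commute_coxeterFactor_coxeterAscProd (ha : IsNilCoxeterFamily a)
    (ht : ∀ j, Commute t (a j)) (hs : ∀ j, Commute s (a j)) (hts : Commute t s) {n k : ℕ}
    (hk : k + 1 ≤ n) : Commute (coxeterFactor a t n) (coxeterAscProd a s k) := by
  induction k with
  | zero => exact Commute.one_right _
  | succ k ih =>
    rw [coxeterAscProd_succ]
    exact (ih (by omega)).mul_right
      (commute_coxeterFactor (ha.commute k n (by omega)).symm hts (ht k) (hs n))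

theorem commute_coxeterFactor_coxeterDescProd (ha : IsNilCoxeterFamily a)
    (ht : ∀ j, Commute t (a j)) (hs : ∀ j, Commute s (a j)) (hts : Commute t s) {n k : ℕ}
    (hk : k + 1 ≤ n) : Commute (coxeterFactor a t n) (coxeterDescProd a s k) := by
  induction k with
  | zero => exact Commute.one_right _
  | succ k ih =>
    rw [coxeterDescProd_succ]
    exact (commute_coxeterFactor (ha.commute k n (by omega)).symm hts (ht k) (hs n)).mul_right
      (ih (by omega))

theorem coxeterAscProd_succ_mul_coxeterDescProd_succ (ha : IsNilCoxeterFamily a)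
    (ht : ∀ j, Commute t (a j)) (n : ℕ) :
    coxeterAscProd a s (n + 1) * coxeterDescProd a t (n + 1) =
      coxeterAscProd a s n * coxeterFactor a (s + t) n * coxeterDescProd a t n := by
  rw [coxeterAscProd_succ, coxeterDescProd_succ, mul_assoc, ← mul_assoc (coxeterFactor a s n),
    coxeterFactor_mul_coxeterFactor (ha.mul_self n) (ht n), mul_assoc]

end Semiring

section Ring

variable {T : Type*} [Ring T] {a : ℕ → T} {t s : T}

theorem coxeterAscProd_neg_mul_coxeterDescProd (ha : IsNilCoxeterFamily a)
    (ht : ∀ j, Commute t (a j)) (n : ℕ) :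
    coxeterAscProd a (-t) n * coxeterDescProd a t n = 1 := by
  induction n with
  | zero => exact one_mul 1
  | succ n ih =>
    rw [ha.coxeterAscProd_succ_mul_coxeterDescProd_succ ht, neg_add_cancel,
      coxeterFactor_zero_left, mul_one, ih]

theorem commute_coxeterDescProd_coxeterAscProd (ha : IsNilCoxeterFamily a)
    (ht : ∀ j, Commute t (a j)) (hs : ∀ j, Commute s (a j)) (hts : Commute t s) (n : ℕ) :
    Commute (coxeterDescProd a t n) (coxeterAscProd a s n) := by
  induction n with
  | zero => exact Commute.one_left _
  | succ n ih =>
    cases n with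
    | zero =>
      simp only [coxeterDescProd_succ, coxeterAscProd_succ, coxeterDescProd_zero,
        coxeterAscProd_zero, mul_one, one_mul]
      rw [Commute, SemiconjBy, coxeterFactor_mul_coxeterFactor (ha.mul_self 0) (hs 0),
        coxeterFactor_mul_coxeterFactor (ha.mul_self 0) (ht 0), add_comm]
    | succ n =>
      have hU := ha.commute_coxeterFactor_coxeterAscProd ht hs hts (n := n + 1) (k := n) le_rfl
      have hD := ha.commute_coxeterFactor_coxeterDescProd hs ht hts.symm (n := n + 1) (k := n)
        le_rfl
      calc coxeterDescProd a t (n + 2) * coxeterAscProd a s (n + 2)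
          = coxeterFactor a t (n + 1) *
              (coxeterDescProd a t (n + 1) * coxeterAscProd a s (n + 1)) *
              coxeterFactor a s (n + 1) := by
            rw [coxeterDescProd_succ a t (n + 1), coxeterAscProd_succ a s (n + 1)]
            simp only [mul_assoc]
        _ = coxeterFactor a t (n + 1) * (coxeterAscProd a s n * coxeterFactor a (s + t) n
              * coxeterDescProd a t n) * coxeterFactor a s (n + 1) := by
            rw [ih.eq, ha.coxeterAscProd_succ_mul_coxeterDescProd_succ ht]
        _ = coxeterAscProd a s n * (coxeterFactor a t (n + 1) * coxeterFactor a (t + s) n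
              * coxeterFactor a s (n + 1)) * coxeterDescProd a t n := by
            rw [add_comm s t]
            simp only [← mul_assoc, hU.eq]
            simp only [mul_assoc, hD.symm.eq]
        _ = coxeterAscProd a s n * (coxeterFactor a s n * coxeterFactor a (s + t) (n + 1)
              * coxeterFactor a t n) * coxeterDescProd a t n := by
            rw [ha.coxeterFactor_yangBaxter ht hs hts, add_comm t s]
        _ = coxeterAscProd a s (n + 2) * coxeterDescProd a t (n + 2) := by
            rw [ha.coxeterAscProd_succ_mul_coxeterDescProd_succ ht, coxeterAscProd_succ,
              coxeterDescProd_succ]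
            simp only [mul_assoc]

theorem commute_coxeterDescProd (ha : IsNilCoxeterFamily a) (ht : ∀ j, Commute t (a j))
    (hs : ∀ j, Commute s (a j)) (hts : Commute t s) (n : ℕ) :
    Commute (coxeterDescProd a t n) (coxeterDescProd a s n) := by
  have hsn : ∀ j, Commute (-s) (a j) := fun j => (hs j).neg_left
  let u : Tˣ :=
    { val := coxeterDescProd a s n
      inv := coxeterAscProd a (-s) n
      val_inv := by
        rw [(ha.commute_coxeterDescProd_coxeterAscProd hs hsn (Commute.neg_right rfl) n).eq,
          ha.coxeterAscProd_neg_mul_coxeterDescProd hs]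
      inv_val := ha.coxeterAscProd_neg_mul_coxeterDescProd hs n }
  have : Commute (coxeterDescProd a t n) ↑u⁻¹ :=
    ha.commute_coxeterDescProd_coxeterAscProd ht hsn hts.neg_right n
  exact Commute.units_inv_right_iff.mp this

end Ring

end IsNilCoxeterFamily

theorem Finset.sum_powersetCard_succ_insert {α β : Type*} [DecidableEq α] [AddCommMonoid β]
    {s : Finset α} {a : α} (ha : a ∉ s) (n : ℕ) (f : Finset α → β) :
    ∑ t ∈ powersetCard (n + 1) (insert a s), f t =
      ∑ t ∈ powersetCard (n + 1) s, f t + ∑ t ∈ powersetCard n s, f (insert a t) := by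
  rw [powersetCard_succ_insert ha, sum_union, sum_image]
  · exact insert_erase_invOn.2.injOn.mono fun t ht ↦ notMem_mono (mem_powersetCard.1 ht).1 ha
  · aesop (add simp [disjoint_left, insert_subset_iff])

theorem Finset.prod_map_reverse_sort_insert_of_le {α M : Type*} [LinearOrder α] [Monoid M]
    (f : α → M) {s : Finset α} {a : α} (ha : a ∉ s) (h : ∀ x ∈ s, a ≤ x) :
    (((insert a s).sort (· ≤ ·)).reverse.map f).prod =
      ((s.sort (· ≤ ·)).reverse.map f).prod * f a := by
  rw [sort_insert (· ≤ ·) h ha]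
  simp

theorem Polynomial.coeff_prod_map_reverse_sort {R α : Type*} [Semiring R] [LinearOrder α]
    (b : α → R) (s : Finset α) (k : ℕ) :
    (((s.sort (· ≤ ·)).reverse.map fun i => 1 + X * C (b i)).prod).coeff k =
      ∑ t ∈ s.powersetCard k, ((t.sort (· ≤ ·)).reverse.map b).prod := by
  induction s using Finset.induction_on_min generalizing k with
  | empty =>
    cases k with
    | zero => simp
    | succ k =>
      rw [Finset.powersetCard_eq_empty.mpr (by simp)]
      simp [coeff_one]
  | insert a s hmin ih =>
    have ha : a ∉ s := fun h => lt_irrefl a (hmin a h)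
    have hle : ∀ x ∈ s, a ≤ x := fun x hx => (hmin x hx).le
    rw [Finset.prod_map_reverse_sort_insert_of_le _ ha hle]
    cases k with
    | zero => rw [mul_coeff_zero, ih]; simp
    | succ k =>
      rw [Finset.sum_powersetCard_succ_insert ha, mul_add, mul_one, coeff_add, ← mul_assoc,
        coeff_mul_C, coeff_mul_X, ih, ih, Finset.sum_mul]
      congr 1
      refine Finset.sum_congr rfl fun t ht => ?_
      have hts := (Finset.mem_powersetCard.mp ht).1
      exact (Finset.prod_map_reverse_sort_insert_of_le b (fun h => ha (hts h))
        fun x hx => hle x (hts hx)).symm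

/-- In `R[X][X]`, `p.map C` is `p` in the outer variable and `C q` is `q` in the inner one. -/
theorem Polynomial.commute_coeff_of_commute_map_C_C {R : Type*} [Semiring R] {p q : R[X]}
    (h : Commute (p.map C) (C q)) (k l : ℕ) : Commute (p.coeff k) (q.coeff l) := by
  have hk : C (p.coeff k) * q = q * C (p.coeff k) := by
    simpa only [coeff_mul_C, coeff_C_mul, coeff_map] using congrArg (coeff · k) h.eq
  change p.coeff k * q.coeff l = q.coeff l * p.coeff k
  simpa only [coeff_mul_C, coeff_C_mul] using congrArg (coeff · l) hk

theorem IsNilCoxeterFamily.commute_coeff_coxeterDescProd_C_X {R : Type*} [Ring R] {a : ℕ → R}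
    (ha : IsNilCoxeterFamily a) (n k l : ℕ) :
    Commute ((coxeterDescProd (C ∘ a) X n).coeff k)
      ((coxeterDescProd (C ∘ a) X n).coeff l) := by
  set F := coxeterDescProd (C ∘ a) X n
  have hF : F.map C = coxeterDescProd (C ∘ C ∘ a) X n := by
    rw [← coe_mapRingHom, map_coxeterDescProd, coe_mapRingHom, map_X]
    congr 1
    ext i
    simp
  have hCF : C F = coxeterDescProd (C ∘ C ∘ a) (C X) n := map_coxeterDescProd _ _ C n
  refine commute_coeff_of_commute_map_C_C ?_ k l
  rw [hF, hCF]
  exact ((ha.map C).map C).commute_coxeterDescProd (fun j => commute_X _)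
    (fun j => (commute_X _).map C) (commute_X _) n

/-- The generators indexed by `ℕ`, extended by `0` beyond `m`; the relations persist. -/
noncomputable def nilANat (m i : ℕ) : NilCoxeter m :=
  if h : i < m then nilA m ⟨i, h⟩ else 0

theorem isNilCoxeterFamily_nilANat (m : ℕ) : IsNilCoxeterFamily (nilANat m) where
  mul_self i := by
    unfold nilANat
    split_ifs with hi
    · rw [nilA, ← map_mul, ← map_zero (RingQuot.mkRingHom (NilCoxeterRel m))]
      exact RingQuot.mkRingHom_rel (NilCoxeterRel.sq ⟨i, hi⟩)
    · exact mul_zero 0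
  braid i := by
    by_cases hi : i + 1 < m
    · simp only [nilANat, dif_pos hi, dif_pos (Nat.lt_of_succ_lt hi), nilA, ← map_mul]
      exact RingQuot.mkRingHom_rel (NilCoxeterRel.braid ⟨i + 1, hi⟩ ⟨i, _⟩ (Or.inr rfl))
    · simp [nilANat, dif_neg hi]
  commute i j hij := by
    by_cases hj : j < m
    · simp only [Commute, SemiconjBy, nilANat, dif_pos hj, dif_pos (by omega : i < m), nilA,
        ← map_mul]
      exact RingQuot.mkRingHom_rel
        (NilCoxeterRel.comm ⟨i, _⟩ ⟨j, hj⟩ (Or.inl (by dsimp only; omega)))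
    · simp [nilANat, dif_neg hj]

theorem nilH_eq_coeff (m k : ℕ) :
    nilH m k = (coxeterDescProd (C ∘ nilANat m) X m).coeff k := by
  rw [nilH, ← coeff_prod_map_reverse_sort, Fin.sort_univ, coxeterDescProd,
    ← List.map_coe_finRange_eq_range, ← List.map_reverse, List.map_map]
  congr 2
  refine List.map_congr_left fun i _ => ?_
  simp [coxeterFactor, nilANat]

/-- Fomin–Stanley: the elements `h_k` of the nilCoxeter algebra pairwise commute. -/
theorem nilH_commute (m k l : ℕ) : nilH m k * nilH m l = nilH m l * nilH m k := by
  rw [nilH_eq_coeff, nilH_eq_coeff]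
  exact ((isNilCoxeterFamily_nilANat m).commute_coeff_coxeterDescProd_C_X m k l).eq
end

section
/- In the nilCoxeter algebra of S_n, the generating function h(t) = Σ_k h_k t^k factors as h(t) = (1 + t A_{n−1})(1 + t A_{n−2}) ⋯ (1 + t A_1). -/
open Polynomial Finset in
lemma nil_key_expand {α : Type*} [LinearOrder α] [DecidableEq α] {R : Type*} [Ring R] (f : α → R)
    (l : List α) (hl : l.Pairwise (· < ·)) :
    ((l.reverse.map fun a => (1 : R[X]) + C (f a) * X).prod)
      = ∑ S ∈ l.toFinset.powerset,
          C (((S.sort (· ≤ ·)).reverse.map f).prod) * X ^ S.card := by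
  induction l with
  | nil => simp
  | cons a l ih =>
    have hlt : ∀ b ∈ l, a < b := fun b hb => (List.pairwise_cons.mp hl).1 b hb
    have hnotmem : a ∉ l.toFinset := by
      simp only [List.mem_toFinset]
      intro h; exact lt_irrefl a (hlt a h)
    have ih' := ih (List.pairwise_cons.mp hl).2
    have hstep : ∀ S ∈ l.toFinset.powerset,
        C (((((insert a S).sort (· ≤ ·)).reverse).map f).prod) * X ^ (insert a S).card
          = (C (((S.sort (· ≤ ·)).reverse.map f).prod) * X ^ S.card) * (C (f a) * X) := by
      intro S hS
      have hSsub : S ⊆ l.toFinset := Finset.mem_powerset.mp hS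
      have haS : a ∉ S := fun h => hnotmem (hSsub h)
      have hle : ∀ b ∈ S, a ≤ b := fun b hb => (hlt b (List.mem_toFinset.mp (hSsub hb))).le
      rw [Finset.sort_insert _ hle haS, Finset.card_insert_of_notMem haS]
      simp only [List.reverse_cons, List.map_append, List.prod_append, List.map_cons,
        List.map_nil, List.prod_cons, List.prod_nil, mul_one, map_mul, pow_succ, ← mul_assoc]
      congr 1
      rw [mul_assoc, mul_assoc, Polynomial.X_pow_mul]
    rw [List.toFinset_cons, Finset.sum_powerset_insert hnotmem, List.reverse_cons,
      List.map_append, List.prod_append, ← ih']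
    simp only [List.map_cons, List.map_nil, List.prod_cons, List.prod_nil, mul_one]
    rw [Finset.sum_congr rfl hstep, ← Finset.sum_mul, ← ih', mul_add, mul_one]

/-- Fomin–Stanley: the generating function `h(t) = Σ_k h_k t^k` factors as
`(1 + t A_{n-1})(1 + t A_{n-2}) ⋯ (1 + t A_1)`. -/
theorem nilH_generating_function (m : ℕ) :
    (∑ k ∈ Finset.range (m + 1), Polynomial.C (nilH m k) * Polynomial.X ^ k)
      = ((List.finRange m).reverse.map
          fun i => (1 : Polynomial (NilCoxeter m)) + Polynomial.C (nilA m i) * Polynomial.X).prod := by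
  rw [nil_key_expand (nilA m) (List.finRange m) (by
    exact List.Pairwise.imp (fun h => h) (List.pairwise_lt_finRange m))]
  have huniv : (List.finRange m).toFinset = (Finset.univ : Finset (Fin m)) := by
    ext i; simp [List.mem_toFinset]
  rw [huniv, Finset.sum_powerset]
  simp only [Finset.card_univ, Fintype.card_fin]
  refine Finset.sum_congr rfl fun k hk => ?_
  rw [nilH, map_sum, Finset.sum_mul]
  refine Finset.sum_congr rfl fun S hS => ?_
  rw [(Finset.mem_powersetCard.mp hS).2]
end

section
/- A permutation w ∈ S_n is 321-avoiding if and only if no reduced word of w contains three consecutive letters of the form j, j+1, j. -/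
/-!
The Coxeter length `ℓ(w)` of `w ∈ S_{n+1}` is its number of inversions, since right
multiplication by `s_j` changes that number by `+1` or `-1` according as `j` is an ascent or a
descent of `w`.
If `ℓ(ab) = ℓ(a) + ℓ(b)`, every inversion of `b` is an inversion of `ab`, and every inversion
`(p, q)` of `a` reappears in `ab` at the positions `b⁻¹ p < b⁻¹ q`; so a 321-pattern of either
factor yields one of `ab`. As `s_j s_{j+1} s_j` reverses `j, j+1, j+2`, a reduced word containing
`j, j+1, j` forces a 321-pattern.

Conversely, let `a < b < c` be a 321-pattern of `w` and pick descents of `w` between `b` and `c`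
and between `a` and `b`. Unless `a, b, c` are consecutive, one of these descents `j` is not a pair
of adjacent entries of the pattern, so `w s_j` still contains a 321-pattern, has smaller length,
and induction applies. If `a, b, c` are consecutive, `w` has a reduced word ending in `j, j+1, j`.
-/

open Equiv

/-- The simple transposition `s_i ∈ S_{n+1}`. -/
def simpleTransposition (n : ℕ) (i : Fin n) : Equiv.Perm (Fin (n + 1)) :=
  Equiv.swap i.castSucc i.succ

/-- Product of a word of simple transpositions. -/
def wordProd (n : ℕ) (l : List (Fin n)) : Equiv.Perm (Fin (n + 1)) :=
  (l.map (simpleTransposition n)).prod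

/-- `l` is a reduced word for `w`: it expresses `w` with minimal length. -/
def IsReducedWord (n : ℕ) (w : Equiv.Perm (Fin (n + 1))) (l : List (Fin n)) : Prop :=
  wordProd n l = w ∧ ∀ l' : List (Fin n), wordProd n l' = w → l.length ≤ l'.length

/-- `w` is 321-avoiding: there are no positions `a < b < c` with `w a > w b > w c`. -/
def Is321Avoiding (n : ℕ) (w : Equiv.Perm (Fin (n + 1))) : Prop :=
  ¬ ∃ a b c : Fin (n + 1), a < b ∧ b < c ∧ w c < w b ∧ w b < w a

section

variable {n : ℕ}

lemma simpleTransposition_mul_self (j : Fin n) :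
    simpleTransposition n j * simpleTransposition n j = 1 :=
  swap_mul_self _ _

lemma simpleTransposition_inv (j : Fin n) :
    (simpleTransposition n j)⁻¹ = simpleTransposition n j :=
  swap_inv _ _

lemma wordProd_append (l l' : List (Fin n)) :
    wordProd n (l ++ l') = wordProd n l * wordProd n l' := by
  simp [wordProd]

lemma wordProd_singleton (j : Fin n) : wordProd n [j] = simpleTransposition n j := by
  simp [wordProd]

lemma simpleTransposition_lt_simpleTransposition {j : Fin n} {x y : Fin (n + 1)} (hxy : x < y)
    (hne : (x, y) ≠ (j.castSucc, j.succ)) :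
    simpleTransposition n j x < simpleTransposition n j y := by
  simp only [simpleTransposition, swap_apply_def, ne_eq, Prod.mk.injEq, Fin.ext_iff,
    Fin.lt_def, Fin.val_castSucc, Fin.val_succ] at *
  split_ifs <;> simp_all <;> omega

def inversions (w : Perm (Fin (n + 1))) : Finset (Fin (n + 1) × Fin (n + 1)) :=
  {p | p.1 < p.2 ∧ w p.2 < w p.1}

def numInversions (w : Perm (Fin (n + 1))) : ℕ := (inversions w).card

lemma mem_inversions {w : Perm (Fin (n + 1))} {p : Fin (n + 1) × Fin (n + 1)} :
    p ∈ inversions w ↔ p.1 < p.2 ∧ w p.2 < w p.1 := by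
  simp [inversions]

lemma numInversions_one : numInversions (1 : Perm (Fin (n + 1))) = 0 := by
  rw [numInversions, Finset.card_eq_zero, inversions, Finset.filter_eq_empty_iff]
  exact fun p _ h ↦ h.1.asymm h.2

lemma numInversions_inv (w : Perm (Fin (n + 1))) : numInversions w⁻¹ = numInversions w :=
  Finset.card_bij' (fun p _ ↦ (w⁻¹ p.2, w⁻¹ p.1)) (fun p _ ↦ (w p.2, w p.1))
    (fun p hp ↦ by simp_all [mem_inversions]) (fun p hp ↦ by simp_all [mem_inversions])
    (by simp) (by simp)

lemma map_mem_erase_inversions_mul {w : Perm (Fin (n + 1))} {j : Fin n}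
    {p : Fin (n + 1) × Fin (n + 1)}
    (hp : p ∈ (inversions (w * simpleTransposition n j)).erase (j.castSucc, j.succ)) :
    Prod.map (simpleTransposition n j) (simpleTransposition n j) p ∈
      (inversions w).erase (j.castSucc, j.succ) := by
  obtain ⟨x, y⟩ := p
  simp only [Finset.mem_erase, mem_inversions, Prod.map] at hp ⊢
  refine ⟨?_, simpleTransposition_lt_simpleTransposition hp.2.1 hp.1, hp.2.2⟩
  simp only [simpleTransposition, swap_apply_def, ne_eq, Prod.mk.injEq, Fin.ext_iff,
    Fin.lt_def, Fin.val_castSucc, Fin.val_succ] at *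
  split_ifs <;> simp_all

lemma card_erase_inversions_mul (w : Perm (Fin (n + 1))) (j : Fin n) :
    ((inversions (w * simpleTransposition n j)).erase (j.castSucc, j.succ)).card =
      ((inversions w).erase (j.castSucc, j.succ)).card := by
  have hinvol :
      Function.Involutive (Prod.map (simpleTransposition n j) (simpleTransposition n j)) :=
    fun p ↦ Prod.ext (swap_apply_self _ _ _) (swap_apply_self _ _ _)
  refine Finset.card_bij' (fun p _ ↦ Prod.map _ _ p) (fun p _ ↦ Prod.map _ _ p)
    (fun p hp ↦ map_mem_erase_inversions_mul hp) (fun p hp ↦ ?_)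
    (fun p _ ↦ hinvol p) (fun p _ ↦ hinvol p)
  apply map_mem_erase_inversions_mul
  rwa [mul_assoc, simpleTransposition_mul_self, mul_one]

lemma numInversions_mul_simpleTransposition_of_lt {w : Perm (Fin (n + 1))} {j : Fin n}
    (h : w j.castSucc < w j.succ) :
    numInversions (w * simpleTransposition n j) = numInversions w + 1 := by
  have hmem : (j.castSucc, j.succ) ∈ inversions (w * simpleTransposition n j) :=
    mem_inversions.2 ⟨j.castSucc_lt_succ, by simpa [simpleTransposition] using h⟩
  have hnmem : (j.castSucc, j.succ) ∉ inversions w := fun hm ↦ (mem_inversions.1 hm).2.asymm h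
  rw [numInversions, numInversions, ← Finset.card_erase_add_one hmem, card_erase_inversions_mul,
    Finset.erase_eq_of_notMem hnmem]

lemma numInversions_mul_simpleTransposition_of_gt {w : Perm (Fin (n + 1))} {j : Fin n}
    (h : w j.succ < w j.castSucc) :
    numInversions (w * simpleTransposition n j) + 1 = numInversions w := by
  have h' : (w * simpleTransposition n j) j.castSucc < (w * simpleTransposition n j) j.succ := by
    simpa [simpleTransposition] using h
  simpa [mul_assoc, simpleTransposition_mul_self] using
    (numInversions_mul_simpleTransposition_of_lt h').symm

lemma numInversions_mul_simpleTransposition_le (w : Perm (Fin (n + 1))) (j : Fin n) :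
    numInversions (w * simpleTransposition n j) ≤ numInversions w + 1 := by
  rcases lt_or_gt_of_ne (w.injective.ne j.castSucc_lt_succ.ne) with h | h
  · exact (numInversions_mul_simpleTransposition_of_lt h).le
  · have := numInversions_mul_simpleTransposition_of_gt h
    omega

lemma numInversions_wordProd_le (l : List (Fin n)) : numInversions (wordProd n l) ≤ l.length := by
  induction l using List.reverseRecOn with
  | nil => simp [wordProd, numInversions_one]
  | append_singleton l j ih =>
    rw [wordProd_append, wordProd_singleton, List.length_append, List.length_singleton]
    exact (numInversions_mul_simpleTransposition_le _ j).trans (by omega)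

lemma exists_descent_between {w : Perm (Fin (n + 1))} {a b : Fin (n + 1)} (hab : a < b)
    (hw : w b < w a) : ∃ j : Fin n, a ≤ j.castSucc ∧ j.succ ≤ b ∧ w j.succ < w j.castSucc := by
  by_contra! hasc
  have hmono : StrictMonoOn w (Set.Icc a b) := by
    refine strictMonoOn_of_lt_succ Set.ordConnected_Icc fun x hx hxI hsI ↦ ?_
    obtain ⟨j, rfl⟩ := (Fin.exists_castSucc_eq (i := x)).2 (by rintro rfl; exact hx isMax_top)
    rw [Fin.orderSucc_castSucc] at hsI ⊢
    exact (hasc j hxI.1 hsI.2).lt_of_ne (w.injective.ne j.castSucc_lt_succ.ne)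
  exact (hmono ⟨le_rfl, hab.le⟩ ⟨hab.le, le_rfl⟩ hab).asymm hw

lemma exists_descent_of_ne_one {w : Perm (Fin (n + 1))} (hw : w ≠ 1) :
    ∃ j : Fin n, w j.succ < w j.castSucc := by
  by_contra! hasc
  refine hw (Equiv.ext fun x ↦ congrFun (StrictMono.eq_id (Fin.strictMono_iff_lt_succ.2
    fun j ↦ (hasc j).lt_of_ne (w.injective.ne j.castSucc_lt_succ.ne))) x)

theorem induction_on_descent {P : Perm (Fin (n + 1)) → Prop}
    (h : ∀ w, (∀ j, w j.succ < w j.castSucc → P (w * simpleTransposition n j)) → P w)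
    (w : Perm (Fin (n + 1))) : P w :=
  h w fun j hj ↦
    have := numInversions_mul_simpleTransposition_of_gt hj
    induction_on_descent h (w * simpleTransposition n j)
termination_by numInversions w

lemma exists_wordProd_eq_and_length_eq_numInversions (w : Perm (Fin (n + 1))) :
    ∃ l : List (Fin n), wordProd n l = w ∧ l.length = numInversions w := by
  induction w using induction_on_descent with
  | h w ih =>
    by_cases hw : w = 1
    · exact ⟨[], by simp [hw, wordProd], by simp [hw, numInversions_one]⟩
    obtain ⟨j, hj⟩ := exists_descent_of_ne_one hw
    obtain ⟨l, hl, hlen⟩ := ih j hj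
    refine ⟨l ++ [j], ?_, ?_⟩
    · rw [wordProd_append, hl, wordProd_singleton, mul_assoc, simpleTransposition_mul_self,
        mul_one]
    · simp [hlen, ← numInversions_mul_simpleTransposition_of_gt hj]

lemma numInversions_mul_le (u v : Perm (Fin (n + 1))) :
    numInversions (u * v) ≤ numInversions u + numInversions v := by
  obtain ⟨lu, rfl, hlu⟩ := exists_wordProd_eq_and_length_eq_numInversions u
  obtain ⟨lv, rfl, hlv⟩ := exists_wordProd_eq_and_length_eq_numInversions v
  simpa [← wordProd_append, hlu, hlv] using numInversions_wordProd_le (lu ++ lv)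

lemma isReducedWord_iff {w : Perm (Fin (n + 1))} {l : List (Fin n)} :
    IsReducedWord n w l ↔ wordProd n l = w ∧ l.length = numInversions w := by
  obtain ⟨l₀, hl₀, hlen₀⟩ := exists_wordProd_eq_and_length_eq_numInversions w
  refine ⟨fun h ↦ ⟨h.1, ?_⟩, fun h ↦ ⟨h.1, fun l' hl' ↦ ?_⟩⟩
  · have := h.1 ▸ numInversions_wordProd_le l
    have := h.2 l₀ hl₀
    omega
  · simpa [h.2, hl'] using numInversions_wordProd_le l'

lemma IsReducedWord.append_singleton {w : Perm (Fin (n + 1))} {l : List (Fin n)} {j : Fin n}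
    (hl : IsReducedWord n (w * simpleTransposition n j) l) (hj : w j.succ < w j.castSucc) :
    IsReducedWord n w (l ++ [j]) := by
  rw [isReducedWord_iff] at hl ⊢
  refine ⟨?_, ?_⟩
  · rw [wordProd_append, hl.1, wordProd_singleton, mul_assoc, simpleTransposition_mul_self,
      mul_one]
  · simp [hl.2, ← numInversions_mul_simpleTransposition_of_gt hj]

lemma IsReducedWord.numInversions_eq_add {w : Perm (Fin (n + 1))} {l l' : List (Fin n)}
    (h : IsReducedWord n w (l ++ l')) :
    numInversions w = numInversions (wordProd n l) + numInversions (wordProd n l') := by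
  rw [isReducedWord_iff, wordProd_append, List.length_append] at h
  have := numInversions_wordProd_le l
  have := numInversions_wordProd_le l'
  have := h.1 ▸ numInversions_mul_le (wordProd n l) (wordProd n l')
  omega

lemma IsReducedWord.of_append_right {w : Perm (Fin (n + 1))} {l l' : List (Fin n)}
    (h : IsReducedWord n w (l ++ l')) : IsReducedWord n (wordProd n l') l' := by
  have hadd := h.numInversions_eq_add
  rw [isReducedWord_iff, List.length_append] at h
  have := numInversions_wordProd_le l
  have := numInversions_wordProd_le l'
  exact isReducedWord_iff.2 ⟨rfl, by omega⟩

lemma inv_apply_lt_of_numInversions_mul_eq_add {a b : Perm (Fin (n + 1))}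
    (hadd : numInversions (a * b) = numInversions a + numInversions b)
    {p q : Fin (n + 1)} (hpq : p < q) (ha : a q < a p) : b⁻¹ p < b⁻¹ q := by
  induction b using induction_on_descent generalizing a with
  | h b ih =>
    by_cases hb : b = 1
    · simpa [hb] using hpq
    obtain ⟨j, hj⟩ := exists_descent_of_ne_one hb
    have hdrop := numInversions_mul_simpleTransposition_of_gt hj
    have hprev := ih j hj (a := a)
    have hb' : b * simpleTransposition n j * simpleTransposition n j = b := by
      rw [mul_assoc, simpleTransposition_mul_self, mul_one]
    generalize b * simpleTransposition n j = b' at hdrop hprev hb'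
    subst hb'
    have hle := numInversions_mul_le a b'
    have hstep := numInversions_mul_simpleTransposition_le (a * b') j
    have hasc : (a * b') j.castSucc < (a * b') j.succ := by
      refine (lt_or_gt_of_ne ((a * b').injective.ne j.castSucc_lt_succ.ne)).resolve_right
        fun hdesc ↦ ?_
      have := numInversions_mul_simpleTransposition_of_gt hdesc
      rw [mul_assoc] at this hstep
      omega
    rw [← mul_assoc] at hadd
    have hne : (b'⁻¹ p, b'⁻¹ q) ≠ (j.castSucc, j.succ) := by
      intro he
      simp only [Prod.mk.injEq] at he
      rw [← he.1, ← he.2] at hasc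
      simp only [Perm.mul_apply, Perm.coe_inv, apply_symm_apply] at hasc
      exact hasc.asymm ha
    have := simpleTransposition_lt_simpleTransposition (hprev (by omega) ha) hne
    rwa [mul_inv_rev, simpleTransposition_inv]

lemma apply_lt_of_numInversions_mul_eq_add {a b : Perm (Fin (n + 1))}
    (hadd : numInversions (a * b) = numInversions a + numInversions b)
    {p q : Fin (n + 1)} (hpq : p < q) (hb : b q < b p) : (a * b) q < (a * b) p := by
  have hadd' : numInversions (b⁻¹ * a⁻¹) = numInversions b⁻¹ + numInversions a⁻¹ := by
    simp only [← mul_inv_rev, numInversions_inv, hadd, add_comm]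
  simpa using inv_apply_lt_of_numInversions_mul_eq_add hadd' hb (by simpa using hpq)

lemma Is321Avoiding.left_of_mul {a b : Perm (Fin (n + 1))} (h : Is321Avoiding n (a * b))
    (hadd : numInversions (a * b) = numInversions a + numInversions b) : Is321Avoiding n a := by
  rintro ⟨x, y, z, hxy, hyz, hzy, hyx⟩
  exact h ⟨b⁻¹ x, b⁻¹ y, b⁻¹ z, inv_apply_lt_of_numInversions_mul_eq_add hadd hxy hyx,
    inv_apply_lt_of_numInversions_mul_eq_add hadd hyz hzy, by simpa using hzy, by simpa using hyx⟩

lemma Is321Avoiding.right_of_mul {a b : Perm (Fin (n + 1))} (h : Is321Avoiding n (a * b))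
    (hadd : numInversions (a * b) = numInversions a + numInversions b) : Is321Avoiding n b := by
  rintro ⟨x, y, z, hxy, hyz, hzy, hyx⟩
  exact h ⟨x, y, z, hxy, hyz, apply_lt_of_numInversions_mul_eq_add hadd hyz hzy,
    apply_lt_of_numInversions_mul_eq_add hadd hxy hyx⟩

lemma not_is321Avoiding_wordProd_braid {j j' : Fin n} (hjj : (j' : ℕ) = j + 1) :
    ¬Is321Avoiding n (wordProd n [j, j', j]) := by
  refine not_not.2 ⟨j.castSucc, j.succ, j'.succ, ?_⟩
  have h₁ : (j : ℕ) + 1 + 1 ≠ j := by omega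
  have h₂ : (j : ℕ) ≠ j + 1 + 1 := by omega
  simp [wordProd, simpleTransposition, swap_apply_def, Fin.ext_iff, ← Fin.val_fin_lt, hjj, h₁, h₂]

lemma Is321Avoiding.not_infix_braid_of_isReducedWord {w : Perm (Fin (n + 1))}
    (h : Is321Avoiding n w) {l : List (Fin n)} (hl : IsReducedWord n w l) {j j' : Fin n}
    (hjj : (j' : ℕ) = j + 1) : ¬[j, j', j] <:+: l := by
  rintro ⟨l₁, l₂, rfl⟩
  rw [List.append_assoc] at hl
  have hadd₁ := hl.numInversions_eq_add
  have hadd₂ := hl.of_append_right.numInversions_eq_add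
  rw [← hl.1, wordProd_append, wordProd_append] at h hadd₁
  rw [wordProd_append] at hadd₂
  exact not_is321Avoiding_wordProd_braid hjj ((h.right_of_mul hadd₁).left_of_mul hadd₂)

lemma exists_isReducedWord (w : Perm (Fin (n + 1))) : ∃ l, IsReducedWord n w l :=
  (exists_wordProd_eq_and_length_eq_numInversions w).imp fun _ ↦ isReducedWord_iff.2

lemma exists_isReducedWord_append_braid {w : Perm (Fin (n + 1))} {j j' : Fin n}
    (hjj : (j' : ℕ) = j + 1) (hj : w j.succ < w j.castSucc) (hj' : w j'.succ < w j'.castSucc) :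
    ∃ l, IsReducedWord n w (l ++ [j, j', j]) := by
  have hsucc : j.succ = j'.castSucc := Fin.ext (by simp [hjj])
  obtain ⟨l, hl⟩ := exists_isReducedWord
    (w * simpleTransposition n j * simpleTransposition n j' * simpleTransposition n j)
  refine ⟨l, ?_⟩
  have h₁ : j'.succ ≠ j.castSucc := (j.castSucc_lt_succ.trans (hsucc ▸ j'.castSucc_lt_succ)).ne'
  have h₂ : j'.succ ≠ j'.castSucc := j'.castSucc_lt_succ.ne'
  have h₃ : j.castSucc ≠ j'.castSucc := hsucc ▸ j.castSucc_lt_succ.ne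
  have hd₁ : (w * simpleTransposition n j) j'.succ < (w * simpleTransposition n j) j'.castSucc := by
    simpa [simpleTransposition, hsucc, swap_apply_of_ne_of_ne h₁ h₂] using hj'.trans (hsucc ▸ hj)
  have hd₂ : (w * simpleTransposition n j * simpleTransposition n j') j.succ <
      (w * simpleTransposition n j * simpleTransposition n j') j.castSucc := by
    simpa [simpleTransposition, hsucc, swap_apply_of_ne_of_ne h₁ h₂,
      swap_apply_of_ne_of_ne h₃ h₁.symm] using hj'
  simpa using ((hl.append_singleton hd₂).append_singleton hd₁).append_singleton hj

lemma not_is321Avoiding_mul_simpleTransposition {w : Perm (Fin (n + 1))} {j : Fin n}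
    {a b c : Fin (n + 1)} (hab : a < b) (hbc : b < c) (hcb : w c < w b) (hba : w b < w a)
    (hab' : (a, b) ≠ (j.castSucc, j.succ)) (hbc' : (b, c) ≠ (j.castSucc, j.succ)) :
    ¬Is321Avoiding n (w * simpleTransposition n j) :=
  not_not.2 ⟨_, _, _, simpleTransposition_lt_simpleTransposition hab hab',
    simpleTransposition_lt_simpleTransposition hbc hbc', by simpa [simpleTransposition] using hcb,
    by simpa [simpleTransposition] using hba⟩

lemma adjacent_descents_or_not_is321Avoiding_mul {w : Perm (Fin (n + 1))}
    (h : ¬Is321Avoiding n w) :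
    (∃ j j' : Fin n, (j' : ℕ) = j + 1 ∧ w j.succ < w j.castSucc ∧ w j'.succ < w j'.castSucc) ∨
      ∃ j, w j.succ < w j.castSucc ∧ ¬Is321Avoiding n (w * simpleTransposition n j) := by
  obtain ⟨a, b, c, hab, hbc, hcb, hba⟩ := not_not.1 h
  obtain ⟨k, hbk, hkc, hk⟩ := exists_descent_between hbc hcb
  obtain ⟨i, hai, hib, hi⟩ := exists_descent_between hab hba
  simp only [Fin.le_def, Fin.val_castSucc, Fin.val_succ] at hbk hkc hai hib
  by_cases hbc_k : (b, c) = (k.castSucc, k.succ)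
  · by_cases hab_i : (a, b) = (i.castSucc, i.succ)
    · simp only [Prod.mk.injEq, Fin.ext_iff, Fin.val_castSucc, Fin.val_succ] at hbc_k hab_i
      exact .inl ⟨i, k, by omega, hi, hk⟩
    · refine .inr ⟨i, hi, not_is321Avoiding_mul_simpleTransposition hab hbc hcb hba hab_i ?_⟩
      simp only [ne_eq, Prod.mk.injEq, Fin.ext_iff, Fin.val_castSucc, Fin.val_succ]
      omega
  · refine .inr ⟨k, hk, not_is321Avoiding_mul_simpleTransposition hab hbc hcb hba ?_ hbc_k⟩
    simp only [ne_eq, Prod.mk.injEq, Fin.ext_iff, Fin.val_castSucc, Fin.val_succ]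
    omega

lemma exists_isReducedWord_infix_braid {w : Perm (Fin (n + 1))} (h : ¬Is321Avoiding n w) :
    ∃ l, IsReducedWord n w l ∧ ∃ j j' : Fin n, (j' : ℕ) = j + 1 ∧ [j, j', j] <:+: l := by
  induction w using induction_on_descent with
  | h w ih =>
    rcases adjacent_descents_or_not_is321Avoiding_mul h with ⟨j, j', hjj, hj, hj'⟩ | ⟨j, hj, hj'⟩
    · obtain ⟨l, hl⟩ := exists_isReducedWord_append_braid hjj hj hj'
      exact ⟨_, hl, j, j', hjj, List.suffix_append _ _ |>.isInfix⟩
    · obtain ⟨l, hl, i, i', hii, hinf⟩ := ih j hj hj'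
      exact ⟨_, hl.append_singleton hj, i, i', hii, hinf.trans (List.prefix_append _ _).isInfix⟩

end

/-- A permutation `w` is 321-avoiding if and only if no reduced word of `w` contains
three consecutive letters of the form `j, j+1, j`. -/
theorem is321Avoiding_iff_no_jjpj (n : ℕ) (w : Equiv.Perm (Fin (n + 1))) :
    Is321Avoiding n w ↔
      ∀ l : List (Fin n), IsReducedWord n w l →
        ¬ ∃ j j' : Fin n, (j' : ℕ) = (j : ℕ) + 1 ∧ [j, j', j] <:+: l := by
  refine ⟨fun h l hl ⟨j, j', hjj, hinf⟩ ↦ h.not_infix_braid_of_isReducedWord hl hjj hinf,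
    fun h ↦ ?_⟩
  by_contra hw
  obtain ⟨l, hl, hbraid⟩ := exists_isReducedWord_infix_braid hw
  exact h l hl hbraid
end

section
/- The affine symmetric group S̃_n embeds into the group of bijections w: ℤ → ℤ satisfying w(i+n) = w(i)+n for all i and Σ_{i=1}^n (w(i) − i) = 0, where the generator s_i maps to the bijection exchanging i+kn and i+1+kn for all k ∈ ℤ and fixing all other integers. -/
/-- The defining relators of the affine symmetric group `S̃_n` on generators
`s_i`, `i ∈ ℤ/nℤ`: `s_i² = 1`, the braid relations `s_i s_{i+1} s_i = s_{i+1} s_i s_{i+1}`,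
and the commutation relations `s_i s_j = s_j s_i` for `i − j ≢ 0, ±1 (mod n)`. -/
def affineRels (n : ℕ) : Set (FreeGroup (ZMod n)) :=
  {r | (∃ i : ZMod n, r = FreeGroup.of i * FreeGroup.of i) ∨
       (∃ i : ZMod n, r = FreeGroup.of i * FreeGroup.of (i + 1) * FreeGroup.of i *
          (FreeGroup.of (i + 1) * FreeGroup.of i * FreeGroup.of (i + 1))⁻¹) ∨
       (∃ i j : ZMod n, j ≠ i ∧ j ≠ i + 1 ∧ i ≠ j + 1 ∧
          r = FreeGroup.of i * FreeGroup.of j * (FreeGroup.of j * FreeGroup.of i)⁻¹)}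

/-- The affine symmetric group `S̃_n`, given by its Coxeter presentation. -/
abbrev AffineSymmetricGroup (n : ℕ) := PresentedGroup (affineRels n)

/-!
The permutations `s_i` satisfy the Coxeter relations, which gives `φ`. For a periodic `w` the
displacement `a ↦ w(a) - a` is `n`-periodic, so `Σ_{a=1}^n (w(a) - a)` is a sum over `ℤ/nℤ`;
since `w` permutes the residues, this sum is additive under composition, and it vanishes on
each `s_i`.

Injectivity rests on the criterion, for the Coxeter group `S̃_n`: if `i` is not a right
descent of `w`, then `φ(w)(a) < φ(w)(a + 1)` for `a ≡ i`. By induction on the length, split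
off a right descent `j ≠ i`, `w = w₁ s_j`; when `i` is adjacent to `j` and is a descent of
`w₁ = w₂ s_i`, the braid relation forbids `j` from being a descent of `w₂`, and the induction
hypothesis for `w₂` at `j` concludes. A nontrivial `w = w₁ s_j` in the kernel, with `j` not a
descent of `w₁`, would make `φ(w₁) = s_j` increasing on the class of `j`, which it is not.
-/

theorem mul_pow_three_eq_one_of_braid {G : Type*} [Group G] {s t : G} (hs : s * s = 1)
    (ht : t * t = 1) (h : s * t * s = t * s * t) : (s * t) ^ 3 = 1 := by
  calc (s * t) ^ 3 = s * t * s * (t * s * t) := by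
        simp only [pow_succ, pow_zero, one_mul, mul_assoc]
    _ = s * t * (s * s) * t * s := by rw [← h]; simp only [mul_assoc]
    _ = 1 := by rw [hs, mul_one, mul_assoc s, ht, mul_one, hs]

theorem mul_pow_two_eq_one_of_commute {G : Type*} [Group G] {s t : G} (hs : s * s = 1)
    (ht : t * t = 1) (h : Commute s t) : (s * t) ^ 2 = 1 := by
  rw [h.mul_pow, sq, sq, hs, ht, one_mul]

namespace PresentedGroup

variable {α : Type*} {rels₁ rels₂ : Set (FreeGroup α)}

theorem normalClosure_le_of_forall_mk_eq_one (h : ∀ r ∈ rels₁, mk rels₂ r = 1) :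
    Subgroup.normalClosure rels₁ ≤ Subgroup.normalClosure rels₂ :=
  Subgroup.normalClosure_le_normal fun r hr => mk_eq_one_iff.mp (h r hr)

def equivOfForallMkEqOne (h₁ : ∀ r ∈ rels₁, mk rels₂ r = 1)
    (h₂ : ∀ r ∈ rels₂, mk rels₁ r = 1) :
    PresentedGroup rels₁ ≃* PresentedGroup rels₂ :=
  QuotientGroup.quotientMulEquivOfEq
    (le_antisymm (normalClosure_le_of_forall_mk_eq_one h₁)
      (normalClosure_le_of_forall_mk_eq_one h₂))

end PresentedGroup

namespace CoxeterSystem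

variable {B W : Type*} [Group W] {M : CoxeterMatrix B} (cs : CoxeterSystem M W) {i j : B} {w : W}

theorem simple_mul_simple_comm_of_eq_two (h : M i j = 2) :
    cs.simple i * cs.simple j = cs.simple j * cs.simple i := by
  have := cs.wordProd_braidWord_eq i j
  rw [braidWord, braidWord, M.symmetric j i, h] at this
  simpa [alternatingWord, wordProd] using this

theorem simple_braid_of_eq_three (h : M i j = 3) :
    cs.simple i * cs.simple j * cs.simple i = cs.simple j * cs.simple i * cs.simple j := by
  have := cs.wordProd_braidWord_eq i j
  rw [braidWord, braidWord, M.symmetric j i, h] at this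
  simpa [alternatingWord, wordProd, mul_assoc] using this.symm

theorem exists_eq_mul_simple_of_isRightDescent (h : cs.IsRightDescent w i) :
    ∃ u, ¬cs.IsRightDescent u i ∧ w = u * cs.simple i :=
  ⟨w * cs.simple i, cs.isRightDescent_iff_not_isRightDescent_mul.mp h,
    (cs.simple_mul_simple_cancel_right i).symm⟩

theorem not_isRightDescent_of_commute (hj : ¬cs.IsRightDescent w j)
    (hi : ¬cs.IsRightDescent (w * cs.simple j) i)
    (hij : cs.simple i * cs.simple j = cs.simple j * cs.simple i) : ¬cs.IsRightDescent w i := by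
  intro hwi
  rw [cs.not_isRightDescent_iff] at hj hi
  rw [cs.isRightDescent_iff] at hwi
  have hle := cs.length_mul_le (w * cs.simple i) (cs.simple j)
  rw [mul_assoc, hij, ← mul_assoc, cs.length_simple] at hle
  omega

theorem not_isRightDescent_of_braid (hi : ¬cs.IsRightDescent w i)
    (hj : ¬cs.IsRightDescent (w * cs.simple i) j)
    (hi' : ¬cs.IsRightDescent (w * cs.simple i * cs.simple j) i)
    (hij : cs.simple i * cs.simple j * cs.simple i = cs.simple j * cs.simple i * cs.simple j) :
    ¬cs.IsRightDescent w j := by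
  intro hwj
  rw [cs.not_isRightDescent_iff] at hi hj hi'
  rw [cs.isRightDescent_iff] at hwj
  have hw : w * cs.simple i * cs.simple j * cs.simple i =
      w * cs.simple j * cs.simple i * cs.simple j := by
    simp only [mul_assoc] at hij ⊢
    rw [hij]
  have h₁ := cs.length_mul_le (w * cs.simple j * cs.simple i) (cs.simple j)
  have h₂ := cs.length_mul_le (w * cs.simple j) (cs.simple i)
  rw [← hw, cs.length_simple] at h₁
  rw [cs.length_simple] at h₂
  omega

end CoxeterSystem

namespace AffineSymmetricGroup

variable {n : ℕ}

instance fact_one_lt_of_fact_two_lt [Fact (2 < n)] : Fact (1 < n) :=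
  ⟨(Fact.out : 2 < n).trans' one_lt_two⟩

@[simp]
theorem add_one_add_one_ne_self [Fact (2 < n)] (x : ZMod n) : x + 1 + 1 ≠ x := by
  rw [add_assoc, one_add_one_eq_two, ne_eq, add_eq_left,
    show (2 : ZMod n) = ((2 : ℕ) : ZMod n) by norm_cast, ZMod.natCast_eq_zero_iff]
  exact fun h => (Nat.le_of_dvd two_pos h).not_gt Fact.out

@[simp]
theorem self_ne_add_one_add_one [Fact (2 < n)] (x : ZMod n) : x ≠ x + 1 + 1 :=
  (add_one_add_one_ne_self x).symm

theorem exists_eq_add_of_intCast_eq_add {a : ℤ} {i : ZMod n} (k : ℤ)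
    (h : (a : ZMod n) = i + k) :
    ∃ b : ℤ, (b : ZMod n) = i ∧ a = b + k :=
  ⟨a - k, by push_cast; rw [h]; ring, by ring⟩

section SimplePerm

variable [Fact (1 < n)]

def simpleFun (i : ZMod n) (a : ℤ) : ℤ :=
  if (a : ZMod n) = i then a + 1 else if (a : ZMod n) = i + 1 then a - 1 else a

theorem simpleFun_involutive (i : ZMod n) : Function.Involutive (simpleFun i) := by
  intro a
  by_cases h₀ : (a : ZMod n) = i
  · subst h₀; simp [simpleFun]
  by_cases h₁ : (a : ZMod n) = i + 1
  · obtain ⟨b, rfl, rfl⟩ := exists_eq_add_of_intCast_eq_add 1 (by simpa using h₁)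
    simp [simpleFun]
  · simp [simpleFun, h₀, h₁]

def simplePerm (i : ZMod n) : Equiv.Perm ℤ := (simpleFun_involutive i).toPerm

theorem simplePerm_apply (i : ZMod n) (a : ℤ) : simplePerm i a =
    if (a : ZMod n) = i then a + 1 else if (a : ZMod n) = i + 1 then a - 1 else a := rfl

theorem simplePerm_mul_self (i : ZMod n) : simplePerm i * simplePerm i = 1 :=
  Equiv.ext (simpleFun_involutive i)

theorem simplePerm_commute {i j : ZMod n} (hji : j ≠ i) (hj : j ≠ i + 1) (hi : i ≠ j + 1) :
    simplePerm i * simplePerm j = simplePerm j * simplePerm i := by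
  ext a
  simp only [Equiv.Perm.mul_apply, simplePerm_apply]
  by_cases h₀ : (a : ZMod n) = i
  · subst h₀; simp [hji.symm, hj.symm, hi]
  by_cases h₁ : (a : ZMod n) = i + 1
  · obtain ⟨b, rfl, rfl⟩ := exists_eq_add_of_intCast_eq_add 1 (by simpa using h₁)
    simp [hji.symm, hj.symm, hi]
  by_cases h₂ : (a : ZMod n) = j
  · subst h₂; simp [hji, hj, hi.symm]
  by_cases h₃ : (a : ZMod n) = j + 1
  · obtain ⟨b, rfl, rfl⟩ := exists_eq_add_of_intCast_eq_add 1 (by simpa using h₃)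
    simp [hji, hj, hi.symm]
  · simp [h₀, h₁, h₂, h₃]

end SimplePerm

theorem simplePerm_braid [Fact (2 < n)] (i : ZMod n) :
    simplePerm i * simplePerm (i + 1) * simplePerm i =
      simplePerm (i + 1) * simplePerm i * simplePerm (i + 1) := by
  ext a
  simp only [Equiv.Perm.mul_apply, simplePerm_apply]
  by_cases h₀ : (a : ZMod n) = i
  · subst h₀; simp
  by_cases h₁ : (a : ZMod n) = i + 1
  · obtain ⟨b, rfl, rfl⟩ := exists_eq_add_of_intCast_eq_add 1 (by simpa using h₁)
    simp
  by_cases h₂ : (a : ZMod n) = i + 1 + 1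
  · obtain ⟨b, rfl, rfl⟩ :=
      exists_eq_add_of_intCast_eq_add (i := i) (1 + 1) (by rw [h₂]; push_cast; ring)
    rw [← add_assoc]
    simp
  · simp [h₀, h₁, h₂]

theorem of_mul_of_self (i : ZMod n) :
    (PresentedGroup.of i : AffineSymmetricGroup n) * PresentedGroup.of i = 1 :=
  PresentedGroup.one_of_mem (Or.inl ⟨i, rfl⟩)

theorem of_braid (i : ZMod n) :
    (PresentedGroup.of i * PresentedGroup.of (i + 1) * PresentedGroup.of i :
        AffineSymmetricGroup n) =
      PresentedGroup.of (i + 1) * PresentedGroup.of i * PresentedGroup.of (i + 1) :=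
  PresentedGroup.mk_eq_mk_of_mul_inv_mem (Or.inr (Or.inl ⟨i, rfl⟩))

theorem of_commute {i j : ZMod n} (hji : j ≠ i) (hj : j ≠ i + 1) (hi : i ≠ j + 1) :
    (PresentedGroup.of i * PresentedGroup.of j : AffineSymmetricGroup n) =
      PresentedGroup.of j * PresentedGroup.of i :=
  PresentedGroup.mk_eq_mk_of_mul_inv_mem (Or.inr (Or.inr ⟨i, j, hji, hj, hi, rfl⟩))

variable (n) in
def toPerm [Fact (2 < n)] : AffineSymmetricGroup n →* Equiv.Perm ℤ :=
  PresentedGroup.toGroup (f := simplePerm) <| by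
    rintro r (⟨i, rfl⟩ | ⟨i, rfl⟩ | ⟨i, j, hji, hj, hi, rfl⟩) <;>
      simp only [map_mul, map_inv, FreeGroup.lift_apply_of, mul_inv_eq_one]
    · exact simplePerm_mul_self i
    · exact simplePerm_braid i
    · exact simplePerm_commute hji hj hi

theorem toPerm_of [Fact (2 < n)] (i : ZMod n) : toPerm n (PresentedGroup.of i) = simplePerm i :=
  PresentedGroup.toGroup.of _

section Periodic

variable (n) in
def periodicPerms : Subgroup (Equiv.Perm ℤ) := Subgroup.centralizer {Equiv.addRight (n : ℤ)}

theorem mem_periodicPerms {f : Equiv.Perm ℤ} :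
    f ∈ periodicPerms n ↔ ∀ a, f (a + n) = f a + n := by
  simp [periodicPerms, Subgroup.mem_centralizer_singleton_iff, Equiv.ext_iff]

variable (n) in
noncomputable def displacementSum (f : Equiv.Perm ℤ) : ℤ :=
  ∑ a ∈ Finset.Icc (1 : ℤ) n, (f a - a)

theorem displacementSum_one : displacementSum n 1 = 0 := by
  simp [displacementSum]

variable [NeZero n] {f : Equiv.Perm ℤ}

theorem apply_sub_self_eq_at_val (hf : f ∈ periodicPerms n) (a : ℤ) :
    f a - a = f (a : ZMod n).val - (a : ZMod n).val := by
  have hper : Function.Periodic (fun a => f a - a) (n : ℤ) := fun a => by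
    simp [mem_periodicPerms.mp hf a]
  rw [ZMod.val_intCast, Int.emod_def, mul_comm]
  exact (hper.sub_int_mul_eq _).symm

theorem intCast_apply_eq_at_val (hf : f ∈ periodicPerms n) (a : ℤ) :
    ((f a : ℤ) : ZMod n) = ((f (a : ZMod n).val : ℤ) : ZMod n) := by
  rw [← sub_add_cancel (f a) a, apply_sub_self_eq_at_val hf a]
  push_cast
  simp

theorem sum_Icc_intCast {M : Type*} [AddCommMonoid M] (g : ZMod n → M) :
    ∑ a ∈ Finset.Icc (1 : ℤ) n, g a = ∑ r : ZMod n, g r := by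
  -- `(r - 1).val + 1` is the representative of `r` in `[1, n]`
  refine Finset.sum_nbij' (fun a => (a : ZMod n)) (fun r => ((r - 1).val + 1 : ℕ)) ?_ ?_ ?_ ?_ ?_
  · simp
  · intro r _
    have := (r - 1).val_lt
    simp only [Finset.mem_Icc]
    omega
  · intro a ha
    rw [Finset.mem_Icc] at ha
    have : (((a : ZMod n) - 1).val : ℤ) = a - 1 := by
      rw [← Int.cast_one, ← Int.cast_sub, ZMod.val_intCast, Int.emod_eq_of_lt] <;> omega
    push_cast
    omega
  · intro r _
    simp
  · intro a _
    rfl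

theorem displacementSum_eq (hf : f ∈ periodicPerms n) :
    displacementSum n f = ∑ r : ZMod n, (f r.val - r.val) := by
  rw [displacementSum, ← sum_Icc_intCast]
  exact Finset.sum_congr rfl fun a _ => apply_sub_self_eq_at_val hf a

theorem bijective_residue (hf : f ∈ periodicPerms n) :
    Function.Bijective fun r : ZMod n => ((f r.val : ℤ) : ZMod n) := by
  refine Finite.injective_iff_bijective.mp (Function.LeftInverse.injective
    (g := fun r : ZMod n => ((f⁻¹ r.val : ℤ) : ZMod n)) fun r => ?_)
  dsimp only
  rw [← intCast_apply_eq_at_val (inv_mem hf)]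
  simp

theorem displacementSum_mul {g : Equiv.Perm ℤ} (hf : f ∈ periodicPerms n)
    (hg : g ∈ periodicPerms n) :
    displacementSum n (f * g) = displacementSum n f + displacementSum n g := by
  have hshift : ∑ r : ZMod n, (f (g r.val) - g r.val) = ∑ r : ZMod n, (f r.val - r.val) := by
    simp_rw [apply_sub_self_eq_at_val hf (g _)]
    exact Fintype.sum_bijective _ (bijective_residue hg) _ _ fun _ => rfl
  rw [displacementSum_eq (mul_mem hf hg), displacementSum_eq hf, displacementSum_eq hg, ← hshift,
    ← Finset.sum_add_distrib]
  simp

variable (n) in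
def affinePerms : Subgroup (Equiv.Perm ℤ) where
  carrier := {f | f ∈ periodicPerms n ∧ displacementSum n f = 0}
  mul_mem' := fun ⟨hf, hf₀⟩ ⟨hg, hg₀⟩ =>
    ⟨mul_mem hf hg, by rw [displacementSum_mul hf hg, hf₀, hg₀, add_zero]⟩
  one_mem' := ⟨one_mem _, displacementSum_one⟩
  inv_mem' := fun {f} ⟨hf, hf₀⟩ => ⟨inv_mem hf, by
    have := displacementSum_mul (inv_mem hf) hf
    rwa [inv_mul_cancel, displacementSum_one, hf₀, add_zero, eq_comm] at this⟩

end Periodic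

theorem simplePerm_mem_affinePerms [Fact (1 < n)] (i : ZMod n) :
    simplePerm i ∈ affinePerms n := by
  have hper : simplePerm i ∈ periodicPerms n := mem_periodicPerms.mpr fun a => by
    simp only [simplePerm_apply, Int.cast_add, Int.cast_natCast, ZMod.natCast_self, add_zero]
    split_ifs <;> ring
  refine ⟨hper, ?_⟩
  have hdisp : ∀ r : ZMod n, simplePerm i r.val - r.val =
      (if r = i then 1 else 0) - (if r = i + 1 then 1 else 0) := fun r => by
    by_cases h : r = i
    · subst h; simp [simplePerm_apply]
    · by_cases h' : r = i + 1 <;> simp [simplePerm_apply, h, h']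
  rw [displacementSum_eq hper, Finset.sum_congr rfl fun r _ => hdisp r, Finset.sum_sub_distrib]
  simp

theorem toPerm_mem_affinePerms [Fact (2 < n)] (w : AffineSymmetricGroup n) :
    toPerm n w ∈ affinePerms n :=
  PresentedGroup.generated_by _ ((affinePerms n).comap (toPerm n))
    (fun i => by simpa [toPerm_of] using simplePerm_mem_affinePerms i) w

section Coxeter

variable (n) in
def coxeterMatrix : CoxeterMatrix (ZMod n) where
  M := Matrix.of fun i j => if i = j then 1 else if j = i + 1 ∨ i = j + 1 then 3 else 2
  isSymm := Matrix.IsSymm.ext fun i j => by simp only [Matrix.of_apply, eq_comm, or_comm]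
  diagonal i := by simp
  off_diagonal i j h := by
    simp only [Matrix.of_apply, if_neg h]
    split_ifs <;> decide

theorem coxeterMatrix_of_adj [Fact (1 < n)] {i j : ZMod n} (h : j = i + 1 ∨ i = j + 1) :
    coxeterMatrix n i j = 3 := by
  have hij : i ≠ j := by rcases h with rfl | rfl <;> simp
  simp [coxeterMatrix, hij, h]

theorem coxeterMatrix_of_not_adj {i j : ZMod n} (hij : i ≠ j) (h : ¬(j = i + 1 ∨ i = j + 1)) :
    coxeterMatrix n i j = 2 := by
  simp [coxeterMatrix, hij, h]

variable [Fact (2 < n)]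

theorem affineRels_mk_eq_one :
    ∀ r ∈ affineRels n, PresentedGroup.mk (coxeterMatrix n).relationsSet r = 1 := by
  rintro r (⟨i, rfl⟩ | ⟨i, rfl⟩ | ⟨i, j, hji, hj, hi, rfl⟩) <;>
    simp only [map_mul, map_inv, mul_inv_eq_one]
  · exact (coxeterMatrix n).toCoxeterSystem.simple_mul_simple_self i
  · exact (coxeterMatrix n).toCoxeterSystem.simple_braid_of_eq_three
      (coxeterMatrix_of_adj (Or.inl rfl))
  · exact (coxeterMatrix n).toCoxeterSystem.simple_mul_simple_comm_of_eq_two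
      (coxeterMatrix_of_not_adj hji.symm (by tauto))

theorem coxeterRels_mk_eq_one :
    ∀ r ∈ (coxeterMatrix n).relationsSet, PresentedGroup.mk (affineRels n) r = 1 := by
  rintro _ ⟨⟨i, j⟩, rfl⟩
  change (PresentedGroup.of i * PresentedGroup.of j : AffineSymmetricGroup n) ^
    coxeterMatrix n i j = 1
  by_cases hij : i = j
  · subst hij
    simpa [coxeterMatrix] using of_mul_of_self i
  by_cases hadj : j = i + 1 ∨ i = j + 1
  · rw [coxeterMatrix_of_adj hadj]
    rcases hadj with rfl | rfl
    · exact mul_pow_three_eq_one_of_braid (of_mul_of_self _) (of_mul_of_self _) (of_braid i)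
    · exact mul_pow_three_eq_one_of_braid (of_mul_of_self _) (of_mul_of_self _) (of_braid j).symm
  · rw [coxeterMatrix_of_not_adj hij hadj]
    exact mul_pow_two_eq_one_of_commute (of_mul_of_self _) (of_mul_of_self _)
      (of_commute (Ne.symm hij) (by tauto) (by tauto))

variable (n) in
def coxeterSystem : CoxeterSystem (coxeterMatrix n) (AffineSymmetricGroup n) :=
  ⟨PresentedGroup.equivOfForallMkEqOne affineRels_mk_eq_one coxeterRels_mk_eq_one⟩

theorem coxeterSystem_simple (i : ZMod n) : (coxeterSystem n).simple i = PresentedGroup.of i :=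
  rfl

end Coxeter

section Ascent

def IsAscent (f : ℤ → ℤ) (i : ZMod n) : Prop :=
  ∀ a : ℤ, (a : ZMod n) = i → f a < f (a + 1)

variable {f : ℤ → ℤ} {i j : ZMod n}

theorem not_isAscent_simplePerm [Fact (1 < n)] (i : ZMod n) : ¬IsAscent (simplePerm i) i := by
  obtain ⟨a, rfl⟩ := ZMod.intCast_surjective i
  intro h
  simpa [simplePerm_apply] using h a rfl

theorem IsAscent.comp_simplePerm_of_not_adj [Fact (1 < n)] (hf : IsAscent f i) (hji : j ≠ i)
    (hj : j ≠ i + 1) (hi : i ≠ j + 1) : IsAscent (f ∘ simplePerm j) i := by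
  rintro a rfl
  simpa [simplePerm_apply, hji.symm, hj.symm, hi] using hf a rfl

variable [Fact (2 < n)]

theorem IsAscent.comp_simplePerm_of_adj (hi : IsAscent f i) (hj : IsAscent f j)
    (hadj : j = i + 1 ∨ i = j + 1) : IsAscent (f ∘ simplePerm j) i := by
  rcases hadj with rfl | rfl
  · rintro a rfl
    simpa [simplePerm_apply] using (hi a rfl).trans (hj (a + 1) (by push_cast; rfl))
  · intro a ha
    obtain ⟨b, rfl, rfl⟩ := exists_eq_add_of_intCast_eq_add 1 (by simpa using ha)
    simpa [simplePerm_apply] using (hj b rfl).trans (hi (b + 1) (by push_cast; rfl))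

theorem IsAscent.comp_simplePerm_simplePerm_of_adj (hj : IsAscent f j)
    (hadj : j = i + 1 ∨ i = j + 1) : IsAscent (f ∘ simplePerm i ∘ simplePerm j) i := by
  rcases hadj with rfl | rfl
  · rintro a rfl
    simpa [simplePerm_apply] using hj (a + 1) (by push_cast; rfl)
  · intro a ha
    obtain ⟨b, rfl, rfl⟩ := exists_eq_add_of_intCast_eq_add 1 (by simpa using ha)
    simpa [simplePerm_apply] using hj b rfl

theorem toPerm_mul_simple (w : AffineSymmetricGroup n) (i : ZMod n) :
    ⇑(toPerm n (w * (coxeterSystem n).simple i)) = toPerm n w ∘ simplePerm i := by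
  rw [map_mul, coxeterSystem_simple, toPerm_of, Equiv.Perm.coe_mul]

theorem isAscent_toPerm_of_not_isRightDescent (w : AffineSymmetricGroup n)
    (hi : ¬(coxeterSystem n).IsRightDescent w i) : IsAscent (toPerm n w) i := by
  set cs := coxeterSystem n
  induction hℓ : cs.length w using Nat.strong_induction_on generalizing w i with
  | _ ℓ ih =>
  rcases eq_or_ne w 1 with rfl | hw
  · intro a _
    simp
  obtain ⟨j, hj⟩ := cs.exists_rightDescent_of_ne_one hw
  have hji : j ≠ i := by rintro rfl; exact hi hj
  obtain ⟨w₁, hj₁, rfl⟩ := cs.exists_eq_mul_simple_of_isRightDescent hj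
  have hℓ₁ : cs.length w₁ < ℓ := by rw [← hℓ, cs.not_isRightDescent_iff.mp hj₁]; omega
  rw [toPerm_mul_simple]
  by_cases hadj : j = i + 1 ∨ i = j + 1
  · by_cases hi₁ : cs.IsRightDescent w₁ i
    · obtain ⟨w₂, hi₂, rfl⟩ := cs.exists_eq_mul_simple_of_isRightDescent hi₁
      have hj₂ := cs.not_isRightDescent_of_braid hi₂ hj₁ hi
        (cs.simple_braid_of_eq_three (coxeterMatrix_of_adj hadj))
      have hℓ₂ : cs.length w₂ < ℓ := by
        rw [cs.not_isRightDescent_iff.mp hi₂] at hℓ₁; omega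
      rw [toPerm_mul_simple]
      exact (ih _ hℓ₂ w₂ hj₂ rfl).comp_simplePerm_simplePerm_of_adj hadj
    · exact (ih _ hℓ₁ w₁ hi₁ rfl).comp_simplePerm_of_adj (ih _ hℓ₁ w₁ hj₁ rfl) hadj
  · have hi₁ := cs.not_isRightDescent_of_commute hj₁ hi
      (cs.simple_mul_simple_comm_of_eq_two (coxeterMatrix_of_not_adj hji.symm hadj))
    push Not at hadj
    exact (ih _ hℓ₁ w₁ hi₁ rfl).comp_simplePerm_of_not_adj hji hadj.1 hadj.2

theorem toPerm_injective : Function.Injective (toPerm n) := by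
  set cs := coxeterSystem n
  rw [injective_iff_map_eq_one]
  intro w hw
  by_contra hne
  obtain ⟨j, hj⟩ := cs.exists_rightDescent_of_ne_one hne
  obtain ⟨w₁, hj₁, rfl⟩ := cs.exists_eq_mul_simple_of_isRightDescent hj
  rw [map_mul, coxeterSystem_simple, toPerm_of, mul_eq_one_iff_eq_inv,
    inv_eq_of_mul_eq_one_right (simplePerm_mul_self j)] at hw
  exact not_isAscent_simplePerm j (hw ▸ isAscent_toPerm_of_not_isRightDescent w₁ hj₁)

end Ascent

end AffineSymmetricGroup

/-- The affine symmetric group `S̃_n` (for `n > 2`) embeds into the group of bijections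
`w : ℤ → ℤ` satisfying `w(i + n) = w(i) + n` for all `i` and `Σ_{i=1}^n (w(i) − i) = 0`;
the generator `s_i` maps to the bijection exchanging `i + kn` and `i + 1 + kn` for all
`k ∈ ℤ` and fixing all other integers. -/
theorem affineSymmetricGroup_embeds (n : ℕ) (hn : 2 < n) :
    ∃ φ : AffineSymmetricGroup n →* Equiv.Perm ℤ,
      Function.Injective φ ∧
      (∀ i : ZMod n, ∀ a : ℤ,
        φ (PresentedGroup.of i) a =
          if (a : ZMod n) = i then a + 1
          else if (a : ZMod n) = i + 1 then a - 1
          else a) ∧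
      ∀ g : AffineSymmetricGroup n,
        (∀ a : ℤ, φ g (a + n) = φ g a + n) ∧
        ∑ a ∈ Finset.Icc (1 : ℤ) (n : ℤ), (φ g a - a) = 0 := by
  have : Fact (2 < n) := ⟨hn⟩
  refine ⟨AffineSymmetricGroup.toPerm n, AffineSymmetricGroup.toPerm_injective, fun i a => ?_,
    fun g => ?_⟩
  · rw [AffineSymmetricGroup.toPerm_of, AffineSymmetricGroup.simplePerm_apply]
  · obtain ⟨hper, hsum⟩ := AffineSymmetricGroup.toPerm_mem_affinePerms g
    exact ⟨AffineSymmetricGroup.mem_periodicPerms.mp hper, hsum⟩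
end
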